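/- arXiv:1905.12501 — 6 statements merged into one kernel-verified Lean document; each statement's English description precedes it below -/
import Mathlib

section
/- Let V be a finite dimensional vector space over a field k with n descending, separated, exhaustive filtrations F_1,...,F_n that admit a splitting V = ⊕_{p∈ℤ^n} V^p (meaning F_i^r V = ⊕_{p: p_i ≥ r} V^p for all i, r). Then the Rees module Rees(V) = Σ_{p∈ℤ^n} F^p V ⊗ z^{-p} k[z_1,...,z_n] ⊆ V ⊗ k[z_1^{±1},...,z_n^{±1}] (where F^p = F_1^{p_1} ∩ ... ∩ F_n^{p_n}) is a free k[z_1,...,z_n]-module of rank dim_k V. -/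
/-!
A splitting yields a basis `(b_j)` of `V` with weights `p_j ∈ ℤ^n` such that every `F^q` is
spanned by the `b_j` with `q ≤ p_j`. The Rees module is then free on the `b_j ⊗ z^{-p_j}`: an
element `s` with `s_d ∈ F^{-d}` is a `k`-combination of vectors `b_j ⊗ z^d` with `-d ≤ p_j`, each
a monomial multiple of `b_j ⊗ z^{-p_j}`, and these generators are independent over `k[z]` because
the `b_j` are independent over `k`.
-/

namespace ToricRees

open Finsupp

variable {k : Type*} [Field k]

/-- Multi-indices. -/
abbrev MIdx (n : ℕ) := Fin n → ℤ

/-- A descending, separated and exhaustive filtration. -/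
structure IsFilt {V : Type*} [AddCommGroup V] [Module k V] (F : ℤ → Submodule k V) : Prop where
  mono : ∀ ⦃p q : ℤ⦄, p ≤ q → F q ≤ F p
  sep : ∃ P : ℤ, ∀ p, P ≤ p → F p = ⊥
  exh : ∃ P : ℤ, ∀ p, p ≤ P → F p = ⊤

variable {n : ℕ} {V W : Type*} [AddCommGroup V] [Module k V] [AddCommGroup W] [Module k W]

/-- `F^p = F_1^{p_1} ∩ ... ∩ F_n^{p_n}`. -/
def fcap (F : Fin n → ℤ → Submodule k V) (p : MIdx n) : Submodule k V := ⨅ i, F i (p i)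

/-- A splitting of an `n`-tuple of filtrations: a `ℤ^n`-grading `V = ⊕_p V^p`
with `F_i^r = ⊕_{p : p_i ≥ r} V^p`. -/
def IsSplitting (F : Fin n → ℤ → Submodule k V) (𝒱 : MIdx n → Submodule k V) : Prop :=
  DirectSum.IsInternal 𝒱 ∧ ∀ (i : Fin n) (r : ℤ), F i r = ⨆ p ∈ {p : MIdx n | r ≤ p i}, 𝒱 p

def Splittable (F : Fin n → ℤ → Submodule k V) : Prop := ∃ 𝒱, IsSplitting F 𝒱

/-- `D^p = F^p / Σ_i F^{p+e_i}`. -/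
noncomputable def Dmod (F : Fin n → ℤ → Submodule k V) (p : MIdx n) :=
  ↥(fcap F p) ⧸
    (Submodule.comap (fcap F p).subtype (⨆ i : Fin n, fcap F (p + Pi.single i 1)))

noncomputable instance (F : Fin n → ℤ → Submodule k V) (p : MIdx n) :
    AddCommGroup (Dmod F p) := by unfold Dmod; infer_instance

noncomputable instance (F : Fin n → ℤ → Submodule k V) (p : MIdx n) :
    Module k (Dmod F p) := by unfold Dmod; infer_instance

/-- Multiplication by `z^g` on `V ⊗ k[z_1^{±1},...,z_n^{±1}] = (ℤ^n →₀ V)`. -/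
noncomputable def shiftL (g : MIdx n) : (MIdx n →₀ V) →ₗ[k] (MIdx n →₀ V) :=
  Finsupp.lmapDomain V k (fun d => d + g)

lemma shiftL_apply (g : MIdx n) (s : MIdx n →₀ V) (d : MIdx n) :
    shiftL (k := k) g s d = s (d - g) := by
  have h : d = (d - g) + g := (sub_add_cancel d g).symm
  rw [h, shiftL]
  simpa using Finsupp.mapDomain_apply (add_left_injective g) s (d - g)

/-- The monoid homomorphism sending a monomial exponent to the corresponding shift. -/
noncomputable def shiftMonoidHom :
    Multiplicative (Fin n →₀ ℕ) →* Module.End k (MIdx n →₀ V) where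
  toFun a := shiftL (fun i => ((Multiplicative.toAdd a) i : ℤ))
  map_one' := LinearMap.ext fun s => Finsupp.ext fun d => by
    rw [shiftL_apply]
    show s _ = s d
    congr 1
    funext i
    simp
  map_mul' a b := LinearMap.ext fun s => Finsupp.ext fun d => by
    show shiftL _ s d = (shiftL _ ∘ₗ shiftL _) s d
    rw [LinearMap.comp_apply, shiftL_apply, shiftL_apply, shiftL_apply]
    congr 1
    funext i
    simp [sub_sub]

/-- The algebra map from `k[z_1,...,z_n]` to endomorphisms of `ℤ^n →₀ V`,
sending `z^a` to the shift by `a`. -/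
noncomputable def polyActionHom (k V : Type*) [Field k] [AddCommGroup V] [Module k V] (n : ℕ) :
    MvPolynomial (Fin n) k →ₐ[k] Module.End k (MIdx n →₀ V) :=
  (AddMonoidAlgebra.lift k (Module.End k (MIdx n →₀ V)) (Fin n →₀ ℕ)) shiftMonoidHom

/-- The `k[z_1,...,z_n]`-module structure on `V ⊗ k[z_1^{±1},...,z_n^{±1}] = (ℤ^n →₀ V)`. -/
noncomputable instance : Module (MvPolynomial (Fin n) k) (MIdx n →₀ V) :=
  Module.compHom _ (polyActionHom k V n).toRingHom

lemma poly_smul_def (p : MvPolynomial (Fin n) k) (s : MIdx n →₀ V) :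
    p • s = polyActionHom k V n p s := rfl

lemma polyActionHom_X (i : Fin n) :
    polyActionHom k V n (MvPolynomial.X i)
      = shiftL (fun j => ((Finsupp.single i 1 : Fin n →₀ ℕ) j : ℤ)) := by
  have hX : (MvPolynomial.X i : MvPolynomial (Fin n) k)
      = AddMonoidAlgebra.single (Finsupp.single i 1) 1 := by
    rw [MvPolynomial.X, MvPolynomial.monomial]
    rfl
  rw [polyActionHom, hX]
  erw [AddMonoidAlgebra.lift_single (shiftMonoidHom (k := k) (n := n) (V := V)) (Finsupp.single i 1) (1 : k)]
  rw [one_smul]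
  rfl

lemma X_smul (i : Fin n) (s : MIdx n →₀ V) :
    (MvPolynomial.X i : MvPolynomial (Fin n) k) • s
      = shiftL (k := k) (fun j => ((Finsupp.single i 1 : Fin n →₀ ℕ) j : ℤ)) s := by
  rw [poly_smul_def, polyActionHom_X]

lemma C_smul (a : k) (s : MIdx n →₀ V) :
    (MvPolynomial.C a : MvPolynomial (Fin n) k) • s = a • s := by
  rw [poly_smul_def]
  have h : (MvPolynomial.C a : MvPolynomial (Fin n) k) = algebraMap k _ a := rfl
  rw [h, AlgHom.commutes]
  rfl

instance : IsScalarTower k (MvPolynomial (Fin n) k) (MIdx n →₀ V) := by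
  constructor
  intro a p s
  rw [poly_smul_def, poly_smul_def, map_smul]
  rfl

/-- The underlying set of the Rees module:
`Rees(V,F) = Σ_p F^p V ⊗ z^{-p} ⊆ V ⊗ k[z^{±1}]`, concretely the set of finitely
supported `V`-valued functions `s` on `ℤ^n` with `s d ∈ F^{-d}`. -/
def ReesSet (F : Fin n → ℤ → Submodule k V) : Set (MIdx n →₀ V) :=
  {s | ∀ d : MIdx n, s d ∈ fcap F (-d)}

lemma shiftL_mem_ReesSet {F : Fin n → ℤ → Submodule k V} (hF : ∀ i, IsFilt (F i))
    {g : MIdx n} (hg : 0 ≤ g) {s : MIdx n →₀ V} (hs : s ∈ ReesSet F) :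
    shiftL (k := k) g s ∈ ReesSet F := by
  intro d
  rw [shiftL_apply]
  have h1 : s (d - g) ∈ fcap F (-(d - g)) := hs _
  refine Submodule.mem_iInf _ |>.2 fun i => ?_
  refine (hF i).mono ?_ ((Submodule.mem_iInf _).1 h1 i)
  have := hg i
  simp only [Pi.neg_apply, Pi.sub_apply, Pi.zero_apply] at *
  omega

lemma polyActionHom_preserves {F : Fin n → ℤ → Submodule k V} (hF : ∀ i, IsFilt (F i))
    (p : MvPolynomial (Fin n) k) :
    ∀ s ∈ ReesSet F, polyActionHom k V n p s ∈ ReesSet F := by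
  have hp : p ∈ (⊤ : Subalgebra k (MvPolynomial (Fin n) k)) := trivial
  rw [← MvPolynomial.adjoin_range_X] at hp
  induction hp using Algebra.adjoin_induction with
  | mem q hq =>
      obtain ⟨i, rfl⟩ := hq
      intro s hs
      rw [polyActionHom_X]
      refine shiftL_mem_ReesSet hF (fun j => ?_) hs
      simp only [Pi.zero_apply]
      positivity
  | algebraMap a =>
      intro s hs
      rw [AlgHom.commutes]
      have : (algebraMap k (Module.End k (MIdx n →₀ V)) a) s = a • s := rfl
      rw [this]
      intro d
      rw [Finsupp.smul_apply]
      exact Submodule.smul_mem _ _ (hs d)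
  | add q r _ _ ihq ihr =>
      intro s hs
      rw [map_add]
      have : (polyActionHom k V n q + polyActionHom k V n r) s
          = polyActionHom k V n q s + polyActionHom k V n r s := rfl
      rw [this]
      intro d
      rw [Finsupp.add_apply]
      exact Submodule.add_mem _ (ihq s hs d) (ihr s hs d)
  | mul q r _ _ ihq ihr =>
      intro s hs
      rw [map_mul]
      exact ihq _ (ihr s hs)

/-- The Rees module `Rees(V,F)` as a `k[z_1,...,z_n]`-submodule of `ℤ^n →₀ V`. -/
noncomputable def ReesModule (F : Fin n → ℤ → Submodule k V) (hF : ∀ i, IsFilt (F i)) :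
    Submodule (MvPolynomial (Fin n) k) (MIdx n →₀ V) where
  carrier := ReesSet F
  zero_mem' := fun d => by simp
  add_mem' := fun {s} {t} hs ht d => by
    rw [Finsupp.add_apply]; exact Submodule.add_mem _ (hs d) (ht d)
  smul_mem' := fun p s hs => by
    rw [poly_smul_def]
    exact polyActionHom_preserves hF p s hs

lemma mem_ReesModule_iff {F : Fin n → ℤ → Submodule k V} {hF : ∀ i, IsFilt (F i)}
    {s : MIdx n →₀ V} : s ∈ ReesModule F hF ↔ ∀ d : MIdx n, s d ∈ fcap F (-d) :=
  Iff.rfl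

lemma mapRange_poly_smul (f : V →ₗ[k] W) (p : MvPolynomial (Fin n) k) (s : MIdx n →₀ V) :
    Finsupp.mapRange.linearMap f (p • s) = p • Finsupp.mapRange.linearMap f s := by
  rw [poly_smul_def, poly_smul_def]
  have hp : p ∈ (⊤ : Subalgebra k (MvPolynomial (Fin n) k)) := trivial
  rw [← MvPolynomial.adjoin_range_X] at hp
  induction hp using Algebra.adjoin_induction generalizing s with
  | mem q hq =>
      obtain ⟨i, rfl⟩ := hq
      rw [polyActionHom_X, polyActionHom_X (V := W)]
      refine Finsupp.ext fun d => ?_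
      rw [Finsupp.mapRange.linearMap_apply, Finsupp.mapRange_apply, shiftL_apply,
        shiftL_apply, Finsupp.mapRange.linearMap_apply, Finsupp.mapRange_apply]
  | algebraMap a =>
      rw [AlgHom.commutes, AlgHom.commutes]
      have h1 : (algebraMap k (Module.End k (MIdx n →₀ V)) a) s = a • s := rfl
      have h2 : ∀ t : MIdx n →₀ W, (algebraMap k (Module.End k (MIdx n →₀ W)) a) t = a • t :=
        fun t => rfl
      rw [h1, h2, map_smul]
  | add q r _ _ ihq ihr =>
      rw [map_add, map_add]
      have h1 : ∀ (q r : Module.End k (MIdx n →₀ V)) (s : MIdx n →₀ V),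
          (q + r) s = q s + r s := fun _ _ _ => rfl
      have h2 : ∀ (q r : Module.End k (MIdx n →₀ W)) (t : MIdx n →₀ W),
          (q + r) t = q t + r t := fun _ _ _ => rfl
      rw [h1, h2, map_add, ihq s, ihr s]
  | mul q r _ _ ihq ihr =>
      rw [map_mul, map_mul]
      have h1 : ∀ (q r : Module.End k (MIdx n →₀ V)) (s : MIdx n →₀ V),
          (q * r) s = q (r s) := fun _ _ _ => rfl
      have h2 : ∀ (q r : Module.End k (MIdx n →₀ W)) (t : MIdx n →₀ W),
          (q * r) t = q (r t) := fun _ _ _ => rfl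
      rw [h1, h2, ihq, ihr]

/-- The map `f ⊗ id` on Laurent-polynomial modules, as a `k[z_1,...,z_n]`-linear map. -/
noncomputable def reesMapA (f : V →ₗ[k] W) :
    (MIdx n →₀ V) →ₗ[MvPolynomial (Fin n) k] (MIdx n →₀ W) where
  toFun := Finsupp.mapRange.linearMap f
  map_add' := map_add _
  map_smul' := fun p s => mapRange_poly_smul f p s

lemma reesMapA_apply (f : V →ₗ[k] W) (s : MIdx n →₀ V) (d : MIdx n) :
    reesMapA f s d = f (s d) := rfl

/-- The induced `k[z_1,...,z_n]`-linear map between Rees modules of a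
filtration-preserving linear map. -/
noncomputable def reesHom {F : Fin n → ℤ → Submodule k V} {G : Fin n → ℤ → Submodule k W}
    (f : V →ₗ[k] W) (hF : ∀ i, IsFilt (F i)) (hG : ∀ i, IsFilt (G i))
    (hf : ∀ i p, Submodule.map f (F i p) ≤ G i p) :
    ↥(ReesModule F hF) →ₗ[MvPolynomial (Fin n) k] ↥(ReesModule G hG) :=
  (reesMapA f).restrict (fun s hs d => by
    rw [reesMapA_apply]
    refine Submodule.mem_iInf _ |>.2 fun i => ?_
    exact hf i _ ⟨s d, (Submodule.mem_iInf _).1 (hs d) i, rfl⟩)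

end ToricRees

namespace ToricRees

open MvPolynomial Submodule

variable {k : Type*} [Field k] {n : ℕ} {V : Type*} [AddCommGroup V] [Module k V]

def castExp (a : Fin n →₀ ℕ) : MIdx n := fun i => a i

lemma castExp_injective : Function.Injective (castExp (n := n)) := fun _ _ h =>
  Finsupp.ext fun i => Int.ofNat_inj.1 (congrFun h i)

lemma exists_castExp_eq {m : MIdx n} (hm : 0 ≤ m) : ∃ a, castExp a = m :=
  ⟨Finsupp.equivFunOnFinite.symm fun i => (m i).toNat,
    funext fun i => by simpa [castExp] using hm i⟩

lemma monomial_smul_single (a : Fin n →₀ ℕ) (r : k) (q : MIdx n) (x : V) :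
    (monomial a r : MvPolynomial (Fin n) k) • Finsupp.single q x
      = Finsupp.single (q + castExp a) (r • x) := by
  have h : polyActionHom k V n (monomial a r) = r • shiftL (castExp a) := by
    erw [polyActionHom, AddMonoidAlgebra.lift_single]
    rfl
  rw [poly_smul_def, h, LinearMap.smul_apply, shiftL, Finsupp.lmapDomain_apply,
    Finsupp.mapDomain_single, Finsupp.smul_single]

lemma smul_single_apply_mem_span (c : MvPolynomial (Fin n) k) (q : MIdx n) (x : V)
    (d : MIdx n) : (c • Finsupp.single q x) d ∈ k ∙ x := by
  induction c using MvPolynomial.induction_on' with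
  | monomial a r =>
    rw [monomial_smul_single, Finsupp.single_apply]
    split_ifs
    exacts [smul_mem _ r (mem_span_singleton_self x), zero_mem _]
  | add c c' hc hc' => rw [add_smul, Finsupp.add_apply]; exact add_mem hc hc'

lemma smul_single_apply_add_castExp (c : MvPolynomial (Fin n) k) (q : MIdx n) (x : V)
    (a : Fin n →₀ ℕ) : (c • Finsupp.single q x) (q + castExp a) = coeff a c • x := by
  classical
  induction c using MvPolynomial.induction_on' with
  | monomial b r =>
    rw [monomial_smul_single, Finsupp.single_apply, coeff_monomial]
    simp only [add_right_inj, castExp_injective.eq_iff]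
    split_ifs <;> simp
  | add c c' hc hc' => rw [add_smul, Finsupp.add_apply, hc, hc', coeff_add, add_smul]

lemma single_mem_span_single {e d : MIdx n} (h : e ≤ d) (x : V) :
    Finsupp.single d x ∈ span (MvPolynomial (Fin n) k) {Finsupp.single e x} := by
  obtain ⟨a, ha⟩ := exists_castExp_eq (sub_nonneg.2 h)
  have : monomial a (1 : k) • Finsupp.single e x = Finsupp.single d x := by
    rw [monomial_smul_single, ha, add_sub_cancel, one_smul]
  exact this ▸ smul_mem _ _ (mem_span_singleton_self _)

theorem linearIndependent_single {ι : Type*} {v : ι → V} (hv : LinearIndependent k v)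
    (deg : ι → MIdx n) :
    LinearIndependent (MvPolynomial (Fin n) k) fun j => Finsupp.single (deg j) (v j) := by
  rw [linearIndependent_iff']
  intro s g hg j₀ hj₀
  ext a
  -- Compare the coefficients of `z^(deg j₀ + a)`: the `v j₀`-component there is `coeff a (g j₀)`.
  set d := deg j₀ + castExp a
  choose r hr using fun j =>
    mem_span_singleton.1 (smul_single_apply_mem_span (g j) (deg j) (v j) d)
  have hsum : ∑ j ∈ s, r j • v j = 0 := by
    simp_rw [hr, ← Finsupp.finsetSum_apply, hg, Finsupp.coe_zero, Pi.zero_apply]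
  have hcoeff : coeff a (g j₀) • v j₀ = 0 := by
    rw [← smul_single_apply_add_castExp, ← hr, linearIndependent_iff'.1 hv s r hsum j₀ hj₀,
      zero_smul]
  simpa [hv.ne_zero j₀] using hcoeff

lemma mem_span_single_of_forall_mem_fcap {ι : Type*} {F : Fin n → ℤ → Submodule k V}
    {v : ι → V} {deg : ι → MIdx n} (hv : ∀ q, fcap F q ≤ span k (v '' {j | q ≤ deg j}))
    {s : MIdx n →₀ V} (hs : ∀ d, s d ∈ fcap F (-d)) :
    s ∈ span (MvPolynomial (Fin n) k) (Set.range fun j => Finsupp.single (-deg j) (v j)) := by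
  set W := span (MvPolynomial (Fin n) k) (Set.range fun j => Finsupp.single (-deg j) (v j))
  have hsingle (d : MIdx n) : Finsupp.single d (s d) ∈ W := by
    suffices span k (v '' {j | -d ≤ deg j}) ≤ (W.restrictScalars k).comap (Finsupp.lsingle d) from
      this (hv _ (hs d))
    rw [span_le]
    rintro _ ⟨j, hj, rfl⟩
    exact span_mono (Set.singleton_subset_iff.2 (Set.mem_range_self j))
      (single_mem_span_single (neg_le.1 hj) _)
  rw [← s.sum_single]
  exact Submodule.finsuppSum_mem _ _ _ _ fun d _ => hsingle d

def IsAdaptedBasis {ι : Type*} (B : Module.Basis ι k V) (deg : ι → MIdx n)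
    (F : Fin n → ℤ → Submodule k V) : Prop :=
  ∀ q, fcap F q = span k (B '' {j | q ≤ deg j})

variable {F : Fin n → ℤ → Submodule k V} (hF : ∀ i, IsFilt (F i)) {ι : Type*}
  {B : Module.Basis ι k V} {deg : ι → MIdx n}

lemma IsAdaptedBasis.reesModule_eq_span (hB : IsAdaptedBasis B deg F) :
    ReesModule F hF
      = span (MvPolynomial (Fin n) k) (Set.range fun j => Finsupp.single (-deg j) (B j)) := by
  refine le_antisymm (fun s hs => mem_span_single_of_forall_mem_fcap (fun q => (hB q).le) hs) ?_
  rw [span_le]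
  rintro _ ⟨j, rfl⟩ d
  rw [Finsupp.single_apply]
  split_ifs with h
  · rw [← h, neg_neg, hB]
    exact subset_span (Set.mem_image_of_mem B (le_refl (deg j)))
  · exact zero_mem _

/-- The Rees module is free on the elements `B j ⊗ z^{-deg j}`. -/
noncomputable def IsAdaptedBasis.reesBasis (hB : IsAdaptedBasis B deg F) :
    Module.Basis ι (MvPolynomial (Fin n) k) (ReesModule F hF) :=
  (Module.Basis.span (linearIndependent_single B.linearIndependent fun j => -deg j)).map
    (LinearEquiv.ofEq _ _ (hB.reesModule_eq_span hF).symm)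

namespace IsSplitting

variable {𝒱 : MIdx n → Submodule k V}

lemma le_filtration (h𝒱 : IsSplitting F 𝒱) {p : MIdx n} {i : Fin n} {r : ℤ} (hr : r ≤ p i) :
    𝒱 p ≤ F i r := by
  rw [h𝒱.2 i r]
  exact le_iSup₂_of_le p hr le_rfl

variable (h𝒱 : IsSplitting F 𝒱) {α : MIdx n → Type*} (b : ∀ p, Module.Basis (α p) k (𝒱 p))

lemma filtration_le_span (i : Fin n) (r : ℤ) :
    F i r ≤ span k (h𝒱.1.collectedBasis b '' {j | r ≤ j.1 i}) := by
  rw [h𝒱.2 i r]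
  refine iSup₂_le fun p hp x hx => (h𝒱.1.collectedBasis b).mem_span_image.2 ?_
  rintro ⟨p', a⟩ hj
  by_contra hne
  exact Finsupp.mem_support_iff.1 hj
    (h𝒱.1.collectedBasis_repr_of_mem_ne b (fun hpp' => hne (by subst hpp'; exact hp)) hx)

theorem isAdaptedBasis : IsAdaptedBasis (h𝒱.1.collectedBasis b) Sigma.fst F := by
  intro q
  apply le_antisymm
  · refine fun x hx => (h𝒱.1.collectedBasis b).mem_span_image.2 fun j hj i => ?_
    exact (h𝒱.1.collectedBasis b).mem_span_image.1
      (h𝒱.filtration_le_span b i (q i) ((mem_iInf _).1 hx i)) hj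
  · rw [span_le]
    rintro _ ⟨j, hj, rfl⟩
    exact (mem_iInf _).2 fun i => h𝒱.le_filtration (hj i) (h𝒱.1.collectedBasis_mem b j)

end IsSplitting

end ToricRees

open ToricRees

/-- For a finite dimensional vector space with `n` descending separated
exhaustive filtrations admitting a splitting, the Rees module is a free
`k[z_1,...,z_n]`-module of rank `dim_k V`. -/
theorem rees_module_free_of_splittable {k V : Type*} [Field k] [AddCommGroup V] [Module k V]
    [FiniteDimensional k V] {n : ℕ} (F : Fin n → ℤ → Submodule k V)
    (hF : ∀ i, IsFilt (F i)) (hsplit : Splittable F) :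
    Module.Free (MvPolynomial (Fin n) k) ↥(ReesModule F hF) ∧
      Module.rank (MvPolynomial (Fin n) k) ↥(ReesModule F hF)
        = (Module.finrank k V : Cardinal) := by
  obtain ⟨𝒱, h𝒱⟩ := hsplit
  let b p := Module.Basis.ofVectorSpace k (𝒱 p)
  let rees := (h𝒱.isAdaptedBasis b).reesBasis hF
  refine ⟨.of_basis rees, ?_⟩
  rw [← rees.mk_eq_rank'', (h𝒱.1.collectedBasis b).mk_eq_rank'', Module.finrank_eq_rank]
end

section
/- Let V be a finite dimensional k-vector space with n descending separated exhaustive filtrations F_1,...,F_n. For p ∈ ℤ^n set F^p = ∩_i F_i^{p_i} and D^p = F^p / (Σ_{i=1}^n F^{p + e_i}), where e_i is the i-th standard basis vector. If Σ_{p∈ℤ^n} dim_k D^p = dim_k V, then the filtrations admit a splitting, i.e. there exists a decomposition V = ⊕_{p∈ℤ^n} V^p with F_i^r V = ⊕_{p: p_i ≥ r} V^p for all i and r. -/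
open ToricRees

/-!
Choose in each `F^p` a complement `V^p` of `Σ_i F^{p+e_i}`, so that `V^p ≅ D^p`. Since the
filtrations are separated, descending induction on `q` gives `F^q = Σ_{p ≥ q} V^p`. As they are
exhaustive, every `F_i^r` is some `F^q` with `q_i = r`, whence `F_i^r = Σ_{p_i ≥ r} V^p`, and
`V = Σ_p V^p`. Finally `D^p = 0` outside a bounded box, so the hypothesis reads
`Σ_p dim V^p = dim V`, which forces the spanning family `(V^p)` to be independent.
-/

namespace Submodule

variable {k V ι : Type*} [Field k] [AddCommGroup V] [Module k V] [FiniteDimensional k V]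

open Module

theorem finrank_finset_sup_le (W : ι → Submodule k V) (T : Finset ι) :
    finrank k ↥(T.sup W) ≤ ∑ i ∈ T, finrank k ↥(W i) := by
  classical
  induction T using Finset.induction_on with
  | empty => simp
  | insert a T ha ih =>
    rw [Finset.sup_insert, Finset.sum_insert ha]
    exact (finrank_add_le_finrank_add_finrank _ _).trans (by omega)

theorem iSupIndep_of_sum_finrank_le (W : ι → Submodule k V) (T : Finset ι)
    (hT : ∀ i ∉ T, W i = ⊥) (h : ∑ i ∈ T, finrank k ↥(W i) ≤ finrank k ↥(⨆ i, W i)) :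
    iSupIndep W := by
  classical
  intro a
  by_cases ha : a ∈ T
  swap
  · rw [hT a ha]
    exact disjoint_bot_left
  have hrest : ⨆ (j) (_ : j ≠ a), W j ≤ (T.erase a).sup W :=
    iSup₂_le fun j hj => by
      by_cases hjT : j ∈ T
      · exact Finset.le_sup (Finset.mem_erase.2 ⟨hj, hjT⟩)
      · rw [hT j hjT]; exact bot_le
  refine Disjoint.mono_right hrest (disjoint_iff.2 (finrank_eq_zero.1 ?_))
  have hsup : ⨆ i, W i = W a ⊔ (T.erase a).sup W := by
    refine le_antisymm (iSup_le fun j => ?_)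
      (sup_le (le_iSup W a) (Finset.sup_le fun j _ => le_iSup W j))
    by_cases hja : j = a
    · exact hja ▸ le_sup_left
    · exact (le_iSup₂_of_le j hja le_rfl).trans (hrest.trans le_sup_right)
  have hsplit := Finset.add_sum_erase T (fun i => finrank k ↥(W i)) ha
  have hrank := finrank_sup_add_finrank_inf_eq (W a) ((T.erase a).sup W)
  have hle := finrank_finset_sup_le W (T.erase a)
  rw [hsup] at h
  omega

end Submodule

namespace ToricRees

open Module

variable {k V : Type*} [Field k] [AddCommGroup V] [Module k V] {n : ℕ}
  {F : Fin n → ℤ → Submodule k V}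

theorem le_iSup_of_le_sup_iSup_add_single {L : Type*} [CompleteLattice L]
    {G 𝒱 : MIdx n → L} (S : MIdx n) (hbot : ∀ p i, S i ≤ p i → G p = ⊥)
    (hstep : ∀ p, G p ≤ 𝒱 p ⊔ ⨆ i, G (p + Pi.single i 1)) (q : MIdx n) :
    G q ≤ ⨆ (p) (_ : q ≤ p), 𝒱 p := by
  induction hm : ∑ i, (S i - q i).toNat using Nat.strong_induction_on generalizing q with
  | _ m ih =>
    refine (hstep q).trans (sup_le (le_iSup₂_of_le q le_rfl le_rfl) (iSup_le fun i => ?_))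
    have hqi : (q + Pi.single i 1 : MIdx n) i = q i + 1 := by simp
    rcases le_or_gt (S i) (q i) with hSq | hqS
    · rw [hbot _ i (by omega)]
      exact bot_le
    have hq : q ≤ q + Pi.single i 1 := le_add_of_nonneg_right (Pi.single_nonneg.2 zero_le_one)
    have hlt : ∑ j, (S j - (q + Pi.single i 1 : MIdx n) j).toNat < m := by
      rw [← hm]
      refine Finset.sum_lt_sum (fun j _ => ?_) ⟨i, Finset.mem_univ i, by omega⟩
      have : q j ≤ (q + Pi.single i 1 : MIdx n) j := hq j
      omega
    exact (ih _ hlt _ rfl).trans (iSup₂_le fun p hp => le_iSup₂_of_le p (hq.trans hp) le_rfl)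

theorem fcap_le (p : MIdx n) (i : Fin n) : fcap F p ≤ F i (p i) :=
  iInf_le _ i

theorem fcap_eq_bot {S : MIdx n} (hS : ∀ i r, S i ≤ r → F i r = ⊥) {p : MIdx n} {i : Fin n}
    (h : S i ≤ p i) : fcap F p = ⊥ :=
  eq_bot_iff.2 ((fcap_le p i).trans (hS i _ h).le)

theorem fcap_eq_top {E : MIdx n} (hE : ∀ i, F i (E i) = ⊤) : fcap F E = ⊤ :=
  eq_top_iff.2 (le_iInf fun i => (hE i).ge)

theorem fcap_update_eq {E : MIdx n} (hE : ∀ i, F i (E i) = ⊤) (i : Fin n) (r : ℤ) :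
    fcap F (Function.update E i r) = F i r := by
  refine le_antisymm ((fcap_le _ i).trans_eq (by simp)) (le_iInf fun j => ?_)
  rcases eq_or_ne j i with rfl | hj
  · simp
  · simp [hj, hE]

theorem fcap_le_iSup_add_single_of_notMem {S E : MIdx n} (hS : ∀ i r, S i ≤ r → F i r = ⊥)
    (hE : ∀ i r, r ≤ E i → F i r = ⊤) {p : MIdx n}
    (hp : p ∉ Fintype.piFinset fun i => Finset.Ico (E i) (S i)) :
    fcap F p ≤ ⨆ i, fcap F (p + Pi.single i 1) := by
  obtain ⟨i, hi⟩ : ∃ i, p i < E i ∨ S i ≤ p i := by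
    simpa [Fintype.mem_piFinset, Finset.mem_Ico, or_iff_not_imp_left] using hp
  rcases hi with hEp | hSp
  · refine le_iSup_of_le i (le_iInf fun j => ?_)
    rcases eq_or_ne j i with rfl | hj
    · simp [hE j (p j + 1) (by omega)]
    · exact (fcap_le p j).trans_eq (by simp [hj])
  · simp [fcap_eq_bot hS hSp]

theorem finrank_Dmod_eq_zero {p : MIdx n} (h : fcap F p ≤ ⨆ i, fcap F (p + Pi.single i 1)) :
    finrank k (Dmod F p) = 0 := by
  have : Subsingleton (Dmod F p) := by
    unfold Dmod
    rw [Submodule.comap_subtype_eq_top.2 h]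
    infer_instance
  exact finrank_zero_of_subsingleton

theorem eq_iSup_of_fcap_le_iSup (hF : ∀ i, IsFilt (F i)) {𝒱 : MIdx n → Submodule k V}
    (hle : ∀ p, 𝒱 p ≤ fcap F p) (hcover : ∀ q, fcap F q ≤ ⨆ (p) (_ : q ≤ p), 𝒱 p)
    (i : Fin n) (r : ℤ) : F i r = ⨆ p ∈ {p : MIdx n | r ≤ p i}, 𝒱 p := by
  choose E hE using fun i => (hF i).exh
  refine le_antisymm ?_ (iSup₂_le fun p hp => (hle p).trans ((fcap_le p i).trans ((hF i).mono hp)))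
  rw [← fcap_update_eq (fun j => hE j _ le_rfl) i r]
  exact (hcover _).trans <| iSup₂_le fun p hp =>
    le_iSup₂_of_le (f := fun p (_ : p ∈ {p : MIdx n | r ≤ p i}) => 𝒱 p) p
      (by simpa using hp i) le_rfl

/-- `𝒱 p` lifts `D^p` to `V`: together the three fields say that `𝒱 p` is a complement of
`Σ_i F^{p+e_i}` in `F^p`. -/
structure IsGradedLift (F : Fin n → ℤ → Submodule k V) (𝒱 : MIdx n → Submodule k V) : Prop where
  le_fcap : ∀ p, 𝒱 p ≤ fcap F p
  fcap_le_sup : ∀ p, fcap F p ≤ 𝒱 p ⊔ ⨆ i, fcap F (p + Pi.single i 1)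
  finrank_eq : ∀ p, finrank k (𝒱 p) = finrank k (Dmod F p)

theorem exists_isGradedLift (F : Fin n → ℤ → Submodule k V) : ∃ 𝒱, IsGradedLift F 𝒱 := by
  choose C hC using fun p : MIdx n => Submodule.exists_isCompl
    (Submodule.comap (fcap F p).subtype (⨆ i, fcap F (p + Pi.single i 1)))
  refine ⟨fun p => (C p).map (fcap F p).subtype, ⟨fun p => Submodule.map_subtype_le _ _,
    fun p => ?_, fun p => ?_⟩⟩
  · have hsup := congrArg (Submodule.map (fcap F p).subtype) (hC p).sup_eq_top
    rw [Submodule.map_sup, Submodule.map_comap_subtype, Submodule.map_subtype_top] at hsup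
    exact hsup.ge.trans (sup_le (le_sup_of_le_right inf_le_right) le_sup_left)
  · rw [(Submodule.equivMapOfInjective _ (Submodule.injective_subtype _) (C p)).finrank_eq.symm]
    exact (Submodule.quotientEquivOfIsCompl _ _ (hC p)).finrank_eq.symm

theorem IsGradedLift.isSplitting [FiniteDimensional k V] {𝒱 : MIdx n → Submodule k V}
    (h𝒱 : IsGradedLift F 𝒱) (hF : ∀ i, IsFilt (F i))
    (hdim : ∑ᶠ p, finrank k (Dmod F p) = finrank k V) : IsSplitting F 𝒱 := by
  choose S hS using fun i => (hF i).sep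
  choose E hE using fun i => (hF i).exh
  have hcover : ∀ q, fcap F q ≤ ⨆ (p) (_ : q ≤ p), 𝒱 p :=
    le_iSup_of_le_sup_iSup_add_single S (fun _ _ => fcap_eq_bot hS) h𝒱.fcap_le_sup
  set T := Fintype.piFinset fun i => Finset.Ico (E i) (S i)
  have hD : ∀ p ∉ T, finrank k (Dmod F p) = 0 := fun p hp =>
    finrank_Dmod_eq_zero (fcap_le_iSup_add_single_of_notMem hS hE hp)
  have htop : ⨆ p, 𝒱 p = ⊤ := eq_top_iff.2 <| (fcap_eq_top fun i => hE i _ le_rfl).ge.trans <|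
    (hcover E).trans (iSup₂_le fun p _ => le_iSup 𝒱 p)
  have hsum : ∑ p ∈ T, finrank k (𝒱 p) = finrank k V := by
    have hsupp : (Function.support fun p => finrank k (Dmod F p)) ⊆ T :=
      fun p hp => by_contra fun hpT => hp (hD p hpT)
    rw [← hdim, finsum_eq_sum_of_support_subset _ hsupp]
    simp only [h𝒱.finrank_eq]
  have hindep : iSupIndep 𝒱 := Submodule.iSupIndep_of_sum_finrank_le 𝒱 T
    (fun p hp => Submodule.finrank_eq_zero.1 ((h𝒱.finrank_eq p).trans (hD p hp)))
    (by rw [htop, finrank_top, hsum])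
  exact ⟨DirectSum.isInternal_submodule_of_iSupIndep_of_iSup_eq_top hindep htop,
    eq_iSup_of_fcap_le_iSup hF h𝒱.le_fcap hcover⟩

end ToricRees

/-- If `Σ_p dim D^p = dim V`, the filtrations admit a splitting. -/
theorem splittable_of_dim_sum {k V : Type*} [Field k] [AddCommGroup V] [Module k V]
    [FiniteDimensional k V] {n : ℕ} (F : Fin n → ℤ → Submodule k V)
    (hF : ∀ i, IsFilt (F i))
    (h : ∑ᶠ p : MIdx n, Module.finrank k (Dmod F p) = Module.finrank k V) :
    Splittable F := by
  obtain ⟨𝒱, h𝒱⟩ := exists_isGradedLift F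
  exact ⟨𝒱, h𝒱.isSplitting hF h⟩
end

section
/- Let V be a finite dimensional k-vector space with two descending, separated, exhaustive filtrations F and G. Then F and G admit a simultaneous splitting: there exists a bigrading V = ⊕_{(p,q)∈ℤ²} V^{p,q} such that F^r = ⊕_{p ≥ r} V^{p,q} and G^s = ⊕_{q ≥ s} V^{p,q}. -/
open ToricRees

/-!
Induct on the subspace `W` being split, for the filtrations `F ∩ W` and `G ∩ W`. If `W ≠ 0`, take
`p` maximal with `F^p ∩ W ≠ 0`, then `q` maximal with `F^p ∩ G^q ∩ W ≠ 0`, and `v ≠ 0` there. Then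
`v ∉ F^{p+1} ∩ W + G^{q+1} ∩ W`, so a linear form `f` kills this sum with `f v ≠ 0`. Each `F^r ∩ W`
either contains `v` (when `r ≤ p`) or lies in `ker f`, and likewise for `G`; hence a splitting of
the smaller space `W ∩ ker f` extends to `W` by adding the line `k v` in bidegree `(p, q)`.
-/

section SupAt

variable {α ι : Type*} [CompleteLattice α]

def supAt (t : ι → α) (c : ι) (a : α) : ι → α := fun i => t i ⊔ ⨆ (_ : i = c), a

lemma supAt_self (t : ι → α) (c : ι) (a : α) : supAt t c a c = t c ⊔ a := by
  rw [supAt, iSup_pos rfl]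

lemma supAt_of_ne (t : ι → α) {c i : ι} (a : α) (h : i ≠ c) : supAt t c a i = t i := by
  rw [supAt, iSup_neg h, sup_bot_eq]

lemma biSup_supAt (t : ι → α) (c : ι) (a : α) (P : ι → Prop) :
    ⨆ (i) (_ : P i), supAt t c a i = (⨆ (i) (_ : P i), t i) ⊔ ⨆ (_ : P c), a := by
  simp only [supAt, iSup_sup_eq]
  rw [iSup_congr fun i => iSup_comm (ι := P i), iSup_iSup_eq_left]

lemma iSup_supAt (t : ι → α) (c : ι) (a : α) : ⨆ i, supAt t c a i = (⨆ i, t i) ⊔ a := by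
  simpa using biSup_supAt t c a fun _ => True

lemma iSupIndep.supAt [IsModularLattice α] {t : ι → α} (ht : iSupIndep t) (c : ι) {a : α}
    (ha : Disjoint a (⨆ i, t i)) : iSupIndep (supAt t c a) := by
  intro i
  rw [biSup_supAt]
  have hrest : t i ⊔ ⨆ (j) (_ : j ≠ i), t j ≤ ⨆ j, t j :=
    sup_le (le_iSup t i) (iSup₂_le fun j _ => le_iSup t j)
  by_cases hi : i = c
  · subst hi
    rw [supAt_self, iSup_neg (not_not_intro rfl), sup_bot_eq, sup_comm]
    exact Disjoint.disjoint_sup_left_of_disjoint_sup_right (ht i) (ha.mono_right hrest)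
  · rw [supAt_of_ne t a hi, iSup_pos (Ne.symm hi)]
    exact (ht i).disjoint_sup_right_of_disjoint_sup_left (ha.symm.mono_left hrest)

end SupAt

section Splitting

variable {k V ι : Type*} [Field k] [AddCommGroup V] [Module k V]

open Submodule LinearMap

lemma inf_eq_inf_inf_ker_sup_span {U W : Submodule k V} {f : V →ₗ[k] k} {v : V}
    (hvU : v ∈ U) (hvW : v ∈ W) (hfv : f v ≠ 0) : U ⊓ W = U ⊓ (W ⊓ ker f) ⊔ k ∙ v := by
  have hle : k ∙ v ≤ U ⊓ W := (span_singleton_le_iff_mem _ _).2 ⟨hvU, hvW⟩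
  calc U ⊓ W = ((k ∙ v) ⊔ ker f) ⊓ (U ⊓ W) := by
        rw [span_singleton_sup_ker_eq_top f hfv, top_inf_eq]
    _ = (k ∙ v) ⊔ ker f ⊓ (U ⊓ W) := sup_inf_assoc_of_le _ hle
    _ = U ⊓ (W ⊓ ker f) ⊔ k ∙ v := by rw [sup_comm, inf_comm (ker f), inf_assoc]

def SplitsOn (F : ℤ → Submodule k V) (deg : ι → ℤ) (W : Submodule k V)
    (𝒱 : ι → Submodule k V) : Prop :=
  ∀ r, F r ⊓ W = ⨆ (i) (_ : r ≤ deg i), 𝒱 i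

lemma SplitsOn.supAt {F : ℤ → Submodule k V} {deg : ι → ℤ} {W : Submodule k V}
    {𝒱 : ι → Submodule k V} {f : V →ₗ[k] k} (h : SplitsOn F deg (W ⊓ ker f) 𝒱)
    (hF : Antitone F) {c : ι} {v : V} (hvF : v ∈ F (deg c)) (hvW : v ∈ W) (hfv : f v ≠ 0)
    (hker : F (deg c + 1) ⊓ W ≤ ker f) : SplitsOn F deg W (supAt 𝒱 c (k ∙ v)) := by
  intro r
  rw [biSup_supAt, ← h r]
  by_cases hr : r ≤ deg c
  · rw [iSup_pos hr]
    exact inf_eq_inf_inf_ker_sup_span (hF hr hvF) hvW hfv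
  · rw [iSup_neg hr, sup_bot_eq, ← inf_assoc, eq_comm, inf_eq_left]
    exact (inf_le_inf_right W (hF (by omega))).trans hker

structure IsBisplitting (F G : ℤ → Submodule k V) (W : Submodule k V)
    (𝒱 : ℤ × ℤ → Submodule k V) : Prop where
  indep : iSupIndep 𝒱
  iSup_eq : ⨆ pq, 𝒱 pq = W
  splitsOn_fst : SplitsOn F Prod.fst W 𝒱
  splitsOn_snd : SplitsOn G Prod.snd W 𝒱

lemma isBisplitting_bot (F G : ℤ → Submodule k V) : IsBisplitting F G ⊥ fun _ => ⊥ where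
  indep _ := disjoint_bot_left
  iSup_eq := iSup_bot
  splitsOn_fst r := by simp
  splitsOn_snd r := by simp

lemma IsBisplitting.supAt {F G : ℤ → Submodule k V} {W : Submodule k V}
    {𝒱 : ℤ × ℤ → Submodule k V} {f : V →ₗ[k] k} (h : IsBisplitting F G (W ⊓ ker f) 𝒱)
    (hF : Antitone F) (hG : Antitone G) {p q : ℤ} {v : V} (hvW : v ∈ W) (hvF : v ∈ F p)
    (hvG : v ∈ G q) (hfv : f v ≠ 0) (hFker : F (p + 1) ⊓ W ≤ ker f)
    (hGker : G (q + 1) ⊓ W ≤ ker f) :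
    IsBisplitting F G W (supAt 𝒱 (p, q) (k ∙ v)) where
  indep := h.indep.supAt _ <| by
    rw [h.iSup_eq]
    exact (disjoint_span_singleton.2 fun (hv : v ∈ W ⊓ ker f) => (hfv hv.2).elim).symm
  iSup_eq := by
    rw [iSup_supAt, h.iSup_eq]
    simpa using (inf_eq_inf_inf_ker_sup_span mem_top hvW hfv).symm
  splitsOn_fst := h.splitsOn_fst.supAt hF hvF hvW hfv hFker
  splitsOn_snd := h.splitsOn_snd.supAt hG hvG hvW hfv hGker

lemma ToricRees.IsFilt.exists_inf_ne_bot_inf_succ_eq_bot {F : ℤ → Submodule k V} (hF : IsFilt F)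
    {U : Submodule k V} (hU : U ≠ ⊥) : ∃ p, F p ⊓ U ≠ ⊥ ∧ F (p + 1) ⊓ U = ⊥ := by
  obtain ⟨P, hP⟩ := hF.sep
  obtain ⟨Q, hQ⟩ := hF.exh
  obtain ⟨p, hp, hmax⟩ := Int.exists_greatest_of_bdd (P := fun p => F p ⊓ U ≠ ⊥)
    ⟨P, fun p hp => not_lt.1 fun h => hp (by rw [hP p h.le, bot_inf_eq])⟩
    ⟨Q, by rwa [hQ Q le_rfl, top_inf_eq]⟩
  exact ⟨p, hp, not_not.1 fun h => (hmax _ h).not_gt (lt_add_one p)⟩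

lemma exists_mem_notMem_succ_sup {F G : ℤ → Submodule k V} (hF : IsFilt F) (hG : IsFilt G)
    {W : Submodule k V} (hW : W ≠ ⊥) :
    ∃ p q v, v ∈ W ∧ v ∈ F p ∧ v ∈ G q ∧ v ∉ F (p + 1) ⊓ W ⊔ G (q + 1) ⊓ W := by
  obtain ⟨p, hp, hp1⟩ := hF.exists_inf_ne_bot_inf_succ_eq_bot hW
  obtain ⟨q, hq, hq1⟩ := hG.exists_inf_ne_bot_inf_succ_eq_bot hp
  obtain ⟨v, ⟨hvG, hvF, hvW⟩, hv0⟩ := exists_mem_ne_zero_of_ne_bot hq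
  refine ⟨p, q, v, hvW, hvF, hvG, fun hv => hv0 ?_⟩
  rw [hp1, bot_sup_eq] at hv
  have : v ∈ G (q + 1) ⊓ (F p ⊓ W) := ⟨hv.1, hvF, hvW⟩
  rwa [hq1, mem_bot] at this

theorem exists_isBisplitting [FiniteDimensional k V] {F G : ℤ → Submodule k V}
    (hF : IsFilt F) (hG : IsFilt G) (W : Submodule k V) : ∃ 𝒱, IsBisplitting F G W 𝒱 := by
  induction W using WellFoundedLT.induction with | ind W ih => ?_
  rcases eq_or_ne W ⊥ with rfl | hW
  · exact ⟨_, isBisplitting_bot F G⟩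
  obtain ⟨p, q, v, hvW, hvF, hvG, hv⟩ := exists_mem_notMem_succ_sup hF hG hW
  obtain ⟨f, hfv, hker⟩ := exists_le_ker_of_notMem hv
  obtain ⟨𝒱, h𝒱⟩ := ih _ (inf_lt_left.2 fun hle => hfv (mem_ker.1 (hle hvW)))
  exact ⟨_, h𝒱.supAt hF.mono hG.mono hvW hvF hvG hfv (le_sup_left.trans hker)
    (le_sup_right.trans hker)⟩

end Splitting

/-- Two descending separated exhaustive filtrations on a finite
dimensional space admit a simultaneous splitting. -/
theorem two_filtrations_splittable {k V : Type*} [Field k] [AddCommGroup V] [Module k V]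
    [FiniteDimensional k V] (F G : ℤ → Submodule k V) (hF : IsFilt F) (hG : IsFilt G) :
    ∃ 𝒱 : ℤ × ℤ → Submodule k V, DirectSum.IsInternal 𝒱 ∧
      (∀ r : ℤ, F r = ⨆ pq ∈ {pq : ℤ × ℤ | r ≤ pq.1}, 𝒱 pq) ∧
      (∀ s : ℤ, G s = ⨆ pq ∈ {pq : ℤ × ℤ | s ≤ pq.2}, 𝒱 pq) := by
  obtain ⟨𝒱, h⟩ := exists_isBisplitting hF hG ⊤
  refine ⟨𝒱, DirectSum.isInternal_submodule_of_iSupIndep_of_iSup_eq_top h.indep h.iSup_eq,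
    fun r => ?_, fun s => ?_⟩
  · simpa using h.splitsOn_fst r
  · simpa using h.splitsOn_snd s
end

section
/- Let f: (V,F) → (W,G) be a filtration-preserving map of finite dimensional k-vector spaces each with one descending separated exhaustive filtration. Then f is strict (i.e. f(F^p) = G^p ∩ im f for all p) if and only if the cokernel of the induced map of Rees modules Rees(f): Rees(V) → Rees(W) over k[z] is torsion-free as a k[z]-module. -/
open ToricRees

namespace ToricRees

variable {k : Type*} [Field k] {n : ℕ} {U V W : Type*} [AddCommGroup U] [Module k U]
  [AddCommGroup V] [Module k V] [AddCommGroup W] [Module k W]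

lemma monomial_smul (m : Fin n →₀ ℕ) (c : k) (s : MIdx n →₀ U) :
    (MvPolynomial.monomial m c : MvPolynomial (Fin n) k) • s
      = c • shiftL (k := k) (fun i => (m i : ℤ)) s := by
  rw [poly_smul_def, polyActionHom]
  erw [AddMonoidAlgebra.lift_single]
  rfl

lemma monomial_smul_apply (m : Fin n →₀ ℕ) (c : k) (s : MIdx n →₀ U) (d : MIdx n) :
    ((MvPolynomial.monomial m c : MvPolynomial (Fin n) k) • s) d
      = c • s (d - fun i => (m i : ℤ)) := by
  rw [monomial_smul, Finsupp.smul_apply, shiftL_apply]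

lemma monomial_smul_single_s7 (m : Fin n →₀ ℕ) (c : k) (d : MIdx n) (v : U) :
    (MvPolynomial.monomial m c : MvPolynomial (Fin n) k) • Finsupp.single d v
      = Finsupp.single (d + fun i => (m i : ℤ)) (c • v) := by
  rw [monomial_smul, shiftL, Finsupp.lmapDomain_apply, Finsupp.mapDomain_single,
    Finsupp.smul_single]

lemma smul_apply (a : MvPolynomial (Fin n) k) (s : MIdx n →₀ U) (d : MIdx n) :
    (a • s) d = ∑ m ∈ a.support, a.coeff m • s (d - fun i => (m i : ℤ)) := by
  conv_lhs => rw [a.as_sum, Finset.sum_smul, Finsupp.finsetSum_apply]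
  simp only [monomial_smul_apply]

/-- For the lexicographic order on `ℤ^n`, which is compatible with addition, the coefficient of
`a • s` at the sum of the two leading exponents is the product of the two leading coefficients. -/
instance : NoZeroSMulDivisors (MvPolynomial (Fin n) k) (MIdx n →₀ U) := by
  refine ⟨fun {a s} h => or_iff_not_imp_left.2 fun ha => ?_⟩
  by_contra hs
  let e : (Fin n →₀ ℕ) → Lex (MIdx n) := fun m => toLex fun i => (m i : ℤ)
  have he : Function.Injective e := fun m m' hmm' =>
    Finsupp.ext fun i => by simpa [e] using congrFun hmm' i
  obtain ⟨M, hM, hMmax⟩ := a.support.exists_max_image e (MvPolynomial.support_nonempty.2 ha)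
  obtain ⟨D, hD, hDmax⟩ :=
    s.support.exists_max_image toLex (Finsupp.support_nonempty_iff.2 hs)
  have hlead : (a • s) (D + ofLex (e M)) = a.coeff M • s D := by
    rw [smul_apply, Finset.sum_eq_single M]
    · simp [e]
    · intro m hm hmM
      rw [Finsupp.notMem_support_iff.1 fun hmem => (hDmax _ hmem).not_gt ?_, smul_zero]
      have hlt : e m < e M := (hMmax m hm).lt_of_ne (he.ne hmM)
      exact (lt_add_of_pos_right (toLex D) (sub_pos.2 hlt)).trans_eq
        (congrArg toLex (add_sub_assoc D (ofLex (e M)) (ofLex (e m)))).symm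
    · exact fun hM' => absurd hM hM'
  rw [h, Finsupp.zero_apply] at hlead
  exact smul_ne_zero (MvPolynomial.mem_support_iff.1 hM) (Finsupp.mem_support_iff.1 hD) hlead.symm

lemma apply_mem_of_smul_apply_mem {a : MvPolynomial (Fin n) k} (ha : a ≠ 0)
    {N : Submodule k U} {t : MIdx n →₀ U} (h : ∀ d, (a • t) d ∈ N) (d : MIdx n) :
    t d ∈ N := by
  have hq : a • Finsupp.mapRange.linearMap N.mkQ t = 0 := by
    rw [← mapRange_poly_smul]
    ext e
    simpa [Submodule.Quotient.mk_eq_zero] using h e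
  simpa [Submodule.Quotient.mk_eq_zero] using
    congr($((eq_zero_or_eq_zero_of_smul_eq_zero hq).resolve_left ha) d)

lemma exists_mapRange_eq_of_forall_mem_map {α : Type*} (f : V →ₗ[k] W)
    (S : α → Submodule k V) (t : α →₀ W) (ht : ∀ a, t a ∈ (S a).map f) :
    ∃ u : α →₀ V, (∀ a, u a ∈ S a) ∧ Finsupp.mapRange f f.map_zero u = t := by
  classical
  have hlift : ∀ a, ∃ v ∈ S a, f v = t a ∧ (t a = 0 → v = 0) := fun a => by
    by_cases h0 : t a = 0
    · exact ⟨0, zero_mem _, by simp [h0], fun _ => rfl⟩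
    · obtain ⟨v, hv, hfv⟩ := ht a
      exact ⟨v, hv, hfv, fun h => absurd h h0⟩
  choose c hcS hcf hc0 using hlift
  refine ⟨Finsupp.onFinset t.support c fun a hca => Finsupp.mem_support_iff.2 (mt (hc0 a) hca),
    fun a => ?_, Finsupp.ext fun a => ?_⟩
  · simpa using hcS a
  · simpa using hcf a

def IsStrict (F : Fin n → ℤ → Submodule k V) (G : Fin n → ℤ → Submodule k W)
    (f : V →ₗ[k] W) : Prop :=
  ∀ p : MIdx n, (fcap F p).map f = fcap G p ⊓ LinearMap.range f

section Filtered

variable {F : Fin n → ℤ → Submodule k V} {G : Fin n → ℤ → Submodule k W}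
  {f : V →ₗ[k] W}

lemma exists_fcap_eq_top (hF : ∀ i, IsFilt (F i)) (p : MIdx n) :
    ∃ m : Fin n →₀ ℕ, fcap F (p - fun i => (m i : ℤ)) = ⊤ := by
  choose P hP using fun i => (hF i).exh
  refine ⟨Finsupp.equivFunOnFinite.symm fun i => (p i - P i).toNat, iInf_eq_top.2 fun i => ?_⟩
  exact hP i _ (by simp only [Finsupp.equivFunOnFinite_symm_apply_apply, Pi.sub_apply]; omega)

lemma map_fcap_le (hf : ∀ i p, Submodule.map f (F i p) ≤ G i p) (p : MIdx n) :
    (fcap F p).map f ≤ fcap G p :=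
  (Monotone.map_iInf_le fun _ _ => Submodule.map_mono).trans (iInf_mono fun i => hf i (p i))

variable (hF : ∀ i, IsFilt (F i)) (hG : ∀ i, IsFilt (G i))
  (hf : ∀ i p, Submodule.map f (F i p) ≤ G i p)

lemma single_mem_ReesModule_iff {d : MIdx n} {v : V} :
    Finsupp.single d v ∈ ReesModule F hF ↔ v ∈ fcap F (-d) := by
  classical
  refine ⟨fun h => by simpa using h d, fun hv e => ?_⟩
  rw [Finsupp.single_apply]
  split_ifs with hde
  · exact hde ▸ hv
  · exact zero_mem _

lemma mem_range_reesHom_iff {t : ReesModule G hG} :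
    t ∈ LinearMap.range (reesHom f hF hG hf) ↔
      ∀ d, (t : MIdx n →₀ W) d ∈ (fcap F (-d)).map f := by
  constructor
  · rintro ⟨u, rfl⟩ d
    exact ⟨(u : MIdx n →₀ V) d, u.2 d, rfl⟩
  · intro ht
    obtain ⟨u, hu, hut⟩ := exists_mapRange_eq_of_forall_mem_map f _ _ ht
    exact ⟨⟨u, hu⟩, Subtype.ext hut⟩

theorem noZeroSMulDivisors_of_isStrict (hstrict : IsStrict F G f) :
    NoZeroSMulDivisors (MvPolynomial (Fin n) k)
      (ReesModule G hG ⧸ LinearMap.range (reesHom f hF hG hf)) := by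
  refine ⟨fun {a x} hax => or_iff_not_imp_left.2 fun ha => ?_⟩
  obtain ⟨t, rfl⟩ := Submodule.Quotient.mk_surjective _ x
  rw [← Submodule.Quotient.mk_smul, Submodule.Quotient.mk_eq_zero,
    mem_range_reesHom_iff] at hax
  rw [Submodule.Quotient.mk_eq_zero, mem_range_reesHom_iff]
  intro d
  rw [hstrict]
  exact ⟨t.2 d, apply_mem_of_smul_apply_mem ha (fun e => LinearMap.map_le_range (hax e)) d⟩

theorem isStrict_of_noZeroSMulDivisors [NoZeroSMulDivisors (MvPolynomial (Fin n) k)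
      (ReesModule G hG ⧸ LinearMap.range (reesHom f hF hG hf))] :
    IsStrict F G f := by
  intro p
  refine le_antisymm (le_inf (map_fcap_le hf p) LinearMap.map_le_range) ?_
  intro w hw
  obtain ⟨hwG, v, rfl⟩ := Submodule.mem_inf.1 hw
  obtain ⟨m, hm⟩ := exists_fcap_eq_top hF p
  let t : ReesModule G hG := ⟨Finsupp.single (-p) (f v), by
    rw [single_mem_ReesModule_iff, neg_neg]; exact hwG⟩
  have hzt : MvPolynomial.monomial m (1 : k) • t ∈ LinearMap.range (reesHom f hF hG hf) := by
    refine ⟨⟨Finsupp.single (-p + fun i => (m i : ℤ)) v, ?_⟩, Subtype.ext ?_⟩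
    · rw [single_mem_ReesModule_iff, neg_add, neg_neg, ← sub_eq_add_neg, hm]
      trivial
    · simp only [Submodule.coe_smul, t, monomial_smul_single_s7, one_smul]
      exact Finsupp.mapRange_single (hf := f.map_zero)
  have ht : t ∈ LinearMap.range (reesHom f hF hG hf) := by
    have hzero : MvPolynomial.monomial m (1 : k) •
        Submodule.Quotient.mk (p := LinearMap.range (reesHom f hF hG hf)) t = 0 := by
      rwa [← Submodule.Quotient.mk_smul, Submodule.Quotient.mk_eq_zero]
    rw [← Submodule.Quotient.mk_eq_zero]
    exact (eq_zero_or_eq_zero_of_smul_eq_zero hzero).resolve_left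
      (MvPolynomial.monomial_eq_zero.not.2 one_ne_zero)
  simpa [t] using (mem_range_reesHom_iff hF hG hf).1 ht (-p)

end Filtered

lemma fcap_const_fin_one (F : ℤ → Submodule k V) (p : MIdx 1) :
    fcap (fun _ : Fin 1 => F) p = F (p 0) :=
  iInf_unique _

lemma isStrict_const_fin_one_iff {F : ℤ → Submodule k V} {G : ℤ → Submodule k W}
    {f : V →ₗ[k] W} :
    IsStrict (fun _ : Fin 1 => F) (fun _ => G) f ↔
      ∀ p : ℤ, (F p).map f = G p ⊓ LinearMap.range f := by
  simp only [IsStrict, fcap_const_fin_one]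
  exact ⟨fun h q => h fun _ => q, fun h p => h (p 0)⟩

end ToricRees

theorem strict_iff_rees_coker_torsionFree_general {k V W : Type*} [Field k]
    [AddCommGroup V] [Module k V] [AddCommGroup W] [Module k W]
    (F : ℤ → Submodule k V) (G : ℤ → Submodule k W) (hF : IsFilt F) (hG : IsFilt G)
    (f : V →ₗ[k] W) (hf : ∀ p, Submodule.map f (F p) ≤ G p) :
    (∀ p : ℤ, Submodule.map f (F p) = G p ⊓ LinearMap.range f) ↔
      ∀ (a : MvPolynomial (Fin 1) k)
        (x : ↥(ReesModule (fun _ : Fin 1 => G) (fun _ => hG)) ⧸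
          LinearMap.range (reesHom f (fun _ : Fin 1 => hF) (fun _ => hG) (fun _ p => hf p))),
        a • x = 0 → a = 0 ∨ x = 0 := by
  rw [← isStrict_const_fin_one_iff]
  constructor
  · intro hstrict a x hax
    have := noZeroSMulDivisors_of_isStrict (fun _ => hF) (fun _ => hG) (fun _ p => hf p) hstrict
    exact eq_zero_or_eq_zero_of_smul_eq_zero hax
  · intro htf
    have : NoZeroSMulDivisors (MvPolynomial (Fin 1) k) _ := ⟨fun hax => htf _ _ hax⟩
    exact isStrict_of_noZeroSMulDivisors (fun _ => hF) (fun _ => hG) (fun _ p => hf p)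

/-- `f` is strict iff the cokernel of `Rees(f)` is torsion-free over
`k[z]`. -/
theorem strict_iff_rees_coker_torsionFree {k V W : Type*} [Field k]
    [AddCommGroup V] [Module k V] [AddCommGroup W] [Module k W]
    [FiniteDimensional k V] [FiniteDimensional k W]
    (F : ℤ → Submodule k V) (G : ℤ → Submodule k W) (hF : IsFilt F) (hG : IsFilt G)
    (f : V →ₗ[k] W) (hf : ∀ p, Submodule.map f (F p) ≤ G p) :
    (∀ p : ℤ, Submodule.map f (F p) = G p ⊓ LinearMap.range f) ↔
      ∀ (a : MvPolynomial (Fin 1) k)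
        (x : ↥(ReesModule (fun _ : Fin 1 => G) (fun _ => hG)) ⧸
          LinearMap.range (reesHom f (fun _ : Fin 1 => hF) (fun _ => hG) (fun _ p => hf p))),
        a • x = 0 → a = 0 ∨ x = 0 :=
  strict_iff_rees_coker_torsionFree_general F G hF hG f hf
end

section
/- Let V be a finite dimensional ℤ^n-graded complex vector space and consider the trivial equivariant holomorphic bundle Ṽ on ℂ^n. Every equivariant holomorphic connection on Ṽ has the form ∇ = d + Ω where Ω = Σ_{p∈ℤ_{≥0}^n} Σ_{i=1}^n A_{p,i} z^p dz_i/z_i with A_{p,i} ∈ End(V) of multidegree -p and A_{p,i} = 0 whenever p_i = 0. In particular, every equivariant holomorphic connection on Ṽ is algebraic. -/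
/-!
Split `V` into its weight spaces `ℬ p` and look at the blocks `z ↦ π_r ∘ Ω(z)_i ∘ π_p` of the
connection form. Equivariance makes each block a continuous function of `z` that is homogeneous of
multidegree `p - r - e_i` for the torus action `z ↦ λ z`. On the dense torus `(ℂˣ)ⁿ` such a
function is the Laurent monomial `z ^ (p - r - e_i)` times its value at `1`, and continuity across
the coordinate hyperplanes forces that value to vanish as soon as an exponent is negative. So every
block is a monomial, and `Ω` is the finite sum of its blocks.
-/

section Multihomogeneous

variable {ι V : Type*} [Fintype ι] [AddCommGroup V] [Module ℂ V]

def IsMultihomogeneous (f : (ι → ℂ) → V) (m : ι → ℤ) : Prop :=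
  ∀ (lam : ι → ℂˣ) z, f (fun j => lam j * z j) = (∏ j, (lam j : ℂ) ^ m j) • f z

omit [Fintype ι] in
theorem dense_setOf_forall_ne_zero : Dense {z : ι → ℂ | ∀ j, z j ≠ 0} := by
  simpa [Set.pi, Set.ofPred_forall] using
    dense_pi Set.univ fun j _ => dense_compl_singleton (0 : ℂ)

namespace IsMultihomogeneous

variable {f : (ι → ℂ) → V} {m : ι → ℤ} (h : IsMultihomogeneous f m)
include h

theorem apply_eq_prod_zpow_smul {z : ι → ℂ} (hz : ∀ j, z j ≠ 0) :
    f z = (∏ j, z j ^ m j) • f 1 := by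
  simpa using h (fun j => Units.mk0 (z j) (hz j)) 1

variable [TopologicalSpace V] [ContinuousSMul ℂ V] [T2Space V] (hf : Continuous f)
include hf

theorem apply_one_eq_zero {j₀ : ι} (hj₀ : m j₀ < 0) : f 1 = 0 := by
  classical
  set k := (-m j₀).toNat
  have hk : (k : ℤ) = -m j₀ := Int.toNat_of_nonneg (by omega)
  -- `t ^ k • f (update 1 j₀ t)` is continuous, equal to `f 1` for `t ≠ 0`, and `0` at `t = 0`
  have hline :
      Set.EqOn (fun t : ℂ => t ^ k • f (Function.update 1 j₀ t)) (fun _ => f 1) {0}ᶜ := by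
    intro t ht
    have hupd : ∀ j, Function.update (1 : ι → ℂ) j₀ t j ≠ 0 := by
      intro j; by_cases hj : j = j₀ <;> simp_all
    dsimp only
    rw [h.apply_eq_prod_zpow_smul hupd, smul_smul, Fintype.prod_eq_single j₀ (by simp_all),
      Function.update_self, ← zpow_natCast, ← zpow_add₀ ht, hk, neg_add_cancel, zpow_zero,
      one_smul]
  have hcont : Continuous fun t : ℂ => t ^ k • f (Function.update 1 j₀ t) :=
    (continuous_pow k).smul (hf.comp (continuous_const.update j₀ continuous_id))
  have := congrFun (hcont.ext_on (dense_compl_singleton 0) continuous_const hline) 0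
  simpa [zero_pow (by omega : k ≠ 0)] using this.symm

theorem eq_prod_pow_smul (z : ι → ℂ) : f z = (∏ j, z j ^ (m j).toNat) • f 1 := by
  refine congrFun (hf.ext_on dense_setOf_forall_ne_zero
    ((continuous_finsetProd _ fun j _ => (continuous_apply j).pow _).smul continuous_const)
    fun z hz => ?_) z
  show f z = (∏ j, z j ^ (m j).toNat) • f 1
  rw [h.apply_eq_prod_zpow_smul hz]
  by_cases h1 : f 1 = 0
  · simp [h1]
  have hm : ∀ j, 0 ≤ m j := fun j => not_lt.1 fun hj => h1 (h.apply_one_eq_zero hf hj)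
  simp_rw [← zpow_natCast, Int.toNat_of_nonneg (hm _)]

end IsMultihomogeneous

end Multihomogeneous

namespace DirectSum.IsInternal

variable {R ι M : Type*} [DecidableEq ι] [Semiring R] [AddCommMonoid M] [Module R M]
  {ℬ : ι → Submodule R M}

noncomputable def proj (h : IsInternal ℬ) (r : ι) : M →ₗ[R] M :=
  (ℬ r).subtype ∘ₗ component R ι (fun p => ℬ p) r ∘ₗ
    (LinearEquiv.ofBijective (coeLinearMap ℬ) h).symm.toLinearMap

variable (h : IsInternal ℬ)
include h

theorem proj_mem (r : ι) (v : M) : h.proj r v ∈ ℬ r :=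
  Submodule.coe_mem _

theorem proj_apply_of_mem {p : ι} {v : M} (hv : v ∈ ℬ p) : h.proj p v = v :=
  congrArg Subtype.val (h.ofBijective_coeLinearMap_of_mem hv)

theorem proj_apply_of_mem_of_ne {p r : ι} {v : M} (hv : v ∈ ℬ p) (hpr : p ≠ r) :
    h.proj r v = 0 :=
  congrArg Subtype.val (h.ofBijective_coeLinearMap_of_mem_ne hpr hv)

theorem induction_on {motive : M → Prop} (mem : ∀ p, ∀ v ∈ ℬ p, motive v) (zero : motive 0)
    (add : ∀ v w, motive v → motive w → motive (v + w)) (v : M) : motive v :=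
  Submodule.iSup_induction ℬ (motive := motive) (h.submodule_iSup_eq_top ▸ Submodule.mem_top)
    mem zero add

theorem sum_proj_apply {S : Finset ι} (hS : ∀ p ∉ S, ℬ p = ⊥) (v : M) :
    ∑ r ∈ S, h.proj r v = v := by
  induction v using h.induction_on with
  | mem p v hv =>
    by_cases hp : p ∈ S
    · rw [Finset.sum_eq_single_of_mem p hp fun r _ hrp =>
        h.proj_apply_of_mem_of_ne hv (Ne.symm hrp), h.proj_apply_of_mem hv]
    · simp [(Submodule.eq_bot_iff _).1 (hS p hp) v hv]
  | zero => simp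
  | add v w hv hw => simp only [map_add, Finset.sum_add_distrib, hv, hw]

theorem proj_apply_eq_smul {A : M →ₗ[R] M} {χ : ι → R} (hA : ∀ p, ∀ v ∈ ℬ p, A v = χ p • v)
    (r : ι) (v : M) : h.proj r (A v) = χ r • h.proj r v := by
  induction v using h.induction_on with
  | mem p v hv =>
    rw [hA p v hv, map_smul]
    rcases eq_or_ne p r with rfl | hpr
    · rfl
    · simp [h.proj_apply_of_mem_of_ne hv hpr]
  | zero => simp
  | add v w hv hw => simp only [map_add, hv, hw, smul_add]

end DirectSum.IsInternal

namespace Finsupp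

variable {κ ι α M : Type*} [Fintype ι] [DecidableEq ι] [AddCommMonoid M]
  (s : Finset κ) (k : κ → ι → α) (X : κ → ι → M)

theorem finsetSum_single_piSingle_apply [DecidableEq α] (q : α) (i : ι) :
    (∑ x ∈ s, ∑ i', single (k x i') (Pi.single i' (X x i'))) q i =
      ∑ x ∈ s with k x i = q, X x i := by
  simp only [finsetSum_apply, Finset.sum_apply, Finset.sum_filter]
  refine Finset.sum_congr rfl fun x _ => ?_
  rw [Fintype.sum_eq_single i fun i' hi' => ?_]
  · simp [single_apply, apply_ite (fun E : ι → M => E i)]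
  · simp [single_apply, apply_ite (fun E : ι → M => E i), Ne.symm hi']

theorem sum_finsetSum_single_piSingle {R : Type*} [Monoid R] [DistribMulAction R M] (c : α → R)
    (i : ι) :
    (∑ x ∈ s, ∑ i', single (k x i') (Pi.single i' (X x i'))).sum (fun q E => c q • E i) =
      ∑ x ∈ s, c (k x i) • X x i := by
  rw [← sum_finsetSum_index (by simp) (by simp)]
  refine Finset.sum_congr rfl fun x _ => ?_
  rw [← sum_finsetSum_index (by simp) (by simp), Fintype.sum_eq_single i fun i' hi' => ?_]
  · simp
  · simp [Ne.symm hi']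

end Finsupp

section Connection

variable {n : ℕ} {V : Type*} [NormedAddCommGroup V] [NormedSpace ℂ V]
  {ℬ : (Fin n → ℤ) → Submodule ℂ V} (hdec : DirectSum.IsInternal ℬ)
  {Ω : (Fin n → ℂ) → Fin n → (V →L[ℂ] V)}

theorem continuous_proj_connection_proj [FiniteDimensional ℂ V] (hΩ : Continuous Ω)
    (p r : Fin n → ℤ) (i : Fin n) (w : V) :
    Continuous fun z => hdec.proj r (Ω z i (hdec.proj p w)) :=
  (hdec.proj r).continuous_of_finiteDimensional.comp
    (((continuous_apply i).comp hΩ).clm_apply continuous_const)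

variable {A : (Fin n → ℂˣ) → (V →ₗ[ℂ] V)}
  (hA : ∀ (lam : Fin n → ℂˣ) (p : Fin n → ℤ) (v : V), v ∈ ℬ p →
    A lam v = (∏ i, (lam i : ℂ) ^ (-(p i))) • v)
  (hequiv : ∀ (lam : Fin n → ℂˣ) (z : Fin n → ℂ) (i : Fin n) (v : V),
    Ω (fun j => (lam j : ℂ) * z j) i v
      = ((lam i : ℂ))⁻¹ • A lam (Ω z i (A (fun j => (lam j)⁻¹) v)))
include hA hequiv

theorem isMultihomogeneous_proj_connection_proj (p r : Fin n → ℤ) (i : Fin n) (w : V) :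
    IsMultihomogeneous (fun z => hdec.proj r (Ω z i (hdec.proj p w)))
      (fun j => p j - r j - if j = i then 1 else 0) := by
  intro lam z
  have hAinv :
      A (fun j => (lam j)⁻¹) (hdec.proj p w) = (∏ j, (lam j : ℂ) ^ p j) • hdec.proj p w := by
    simp [hA _ p _ (hdec.proj_mem p w)]
  simp only [hequiv, hAinv, map_smul, hdec.proj_apply_eq_smul (hA lam), smul_smul]
  congr 1
  have hne : ∀ j, (lam j : ℂ) ≠ 0 := fun j => (lam j).ne_zero
  simp_rw [zpow_sub₀ (hne _), div_eq_mul_inv, Finset.prod_mul_distrib, Finset.prod_inv_distrib,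
    zpow_neg]
  simp [apply_ite]
  ring

variable [FiniteDimensional ℂ V] (hΩ : Continuous Ω)
include hΩ

theorem proj_connection_proj_eq_monomial (p r : Fin n → ℤ) (i : Fin n) (w : V)
    (z : Fin n → ℂ) :
    hdec.proj r (Ω z i (hdec.proj p w)) =
      (∏ j, z j ^ (p j - r j - if j = i then 1 else 0).toNat) •
        hdec.proj r (Ω 1 i (hdec.proj p w)) :=
  (isMultihomogeneous_proj_connection_proj hdec hA hequiv p r i w).eq_prod_pow_smul
    (continuous_proj_connection_proj hdec hΩ p r i w) z

theorem proj_connection_proj_one_mem {p p' r : Fin n → ℤ} {i : Fin n} {q : Fin n → ℕ}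
    (hq : (fun j => (p' j - r j - if j = i then 1 else 0).toNat) = q) {v : V} (hv : v ∈ ℬ p) :
    hdec.proj r (Ω 1 i (hdec.proj p' v)) ∈ ℬ (fun j => p j - q j - if j = i then 1 else 0) := by
  rcases eq_or_ne p p' with rfl | hpp'
  · by_cases hm : ∀ j, 0 ≤ p j - r j - if j = i then 1 else 0
    · have hr : (fun j => p j - q j - if j = i then 1 else 0) = r := by
        subst hq; funext j; have := hm j; beta_reduce; omega
      rw [hr]
      exact hdec.proj_mem r _
    · push Not at hm
      obtain ⟨j, hj⟩ := hm
      have := (isMultihomogeneous_proj_connection_proj hdec hA hequiv p r i v).apply_one_eq_zero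
        (continuous_proj_connection_proj hdec hΩ p r i v) hj
      exact this ▸ zero_mem _
  · rw [hdec.proj_apply_of_mem_of_ne hv hpp', map_zero, map_zero]
    exact zero_mem _

end Connection

/-- `Ω z i` is the coefficient of `dz_i`, and the exponent of the paper's `z^p dz_i/z_i` is
written `q = p - e_i ∈ ℕⁿ`. -/
theorem equivariant_connection_algebraic {n : ℕ} {V : Type*}
    [NormedAddCommGroup V] [NormedSpace ℂ V] [FiniteDimensional ℂ V]
    (ℬ : (Fin n → ℤ) → Submodule ℂ V) (hdec : DirectSum.IsInternal ℬ)
    (A : (Fin n → ℂˣ) → (V →ₗ[ℂ] V))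
    (hA : ∀ (lam : Fin n → ℂˣ) (p : Fin n → ℤ) (v : V), v ∈ ℬ p →
      A lam v = (∏ i, (lam i : ℂ) ^ (-(p i))) • v)
    (Ω : (Fin n → ℂ) → Fin n → (V →L[ℂ] V)) (hΩ : Differentiable ℂ Ω)
    (hequiv : ∀ (lam : Fin n → ℂˣ) (z : Fin n → ℂ) (i : Fin n) (v : V),
      Ω (fun j => (lam j : ℂ) * z j) i v
        = ((lam i : ℂ))⁻¹ • A lam (Ω z i (A (fun j => (lam j)⁻¹) v))) :
    ∃ c : (Fin n → ℕ) →₀ (Fin n → (V →L[ℂ] V)),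
      (∀ (q : Fin n → ℕ) (i : Fin n) (p : Fin n → ℤ) (v : V), v ∈ ℬ p →
        c q i v ∈ ℬ (fun j => p j - q j - (if j = i then 1 else 0))) ∧
      ∀ z i, Ω z i = c.sum fun q E => (∏ j, z j ^ q j) • E i := by
  classical
  obtain ⟨S, hS⟩ : ∃ S : Finset (Fin n → ℤ), ∀ p ∉ S, ℬ p = ⊥ :=
    ⟨(WellFoundedGT.finite_ne_bot_of_iSupIndep hdec.submodule_iSupIndep).toFinset, by simp⟩
  let m : (Fin n → ℤ) × (Fin n → ℤ) → Fin n → Fin n → ℤ :=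
    fun x i j => x.1 j - x.2 j - if j = i then 1 else 0
  let B : (Fin n → ℤ) × (Fin n → ℤ) → Fin n → V →L[ℂ] V := fun x i =>
    LinearMap.toContinuousLinearMap (hdec.proj x.2 ∘ₗ (Ω 1 i : V →ₗ[ℂ] V) ∘ₗ hdec.proj x.1)
  -- the block of `Ω 1 i` from `ℬ x.1` to `ℬ x.2` sits in degree `(m x i).toNat`; the truncation
  -- is harmless because blocks with a negative exponent vanish
  refine ⟨∑ x ∈ S ×ˢ S, ∑ i, Finsupp.single (fun j => (m x i j).toNat) (Pi.single i (B x i)),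
    fun q i p v hv => ?_, fun z i => ?_⟩
  · rw [Finsupp.finsetSum_single_piSingle_apply, sum_apply]
    exact Submodule.sum_mem _ fun x hx =>
      proj_connection_proj_one_mem hdec hA hequiv hΩ.continuous (Finset.mem_filter.1 hx).2 hv
  · rw [Finsupp.sum_finsetSum_single_piSingle]
    ext v
    calc Ω z i v = ∑ p ∈ S, ∑ r ∈ S, hdec.proj r (Ω z i (hdec.proj p v)) := by
          conv_lhs => rw [← hdec.sum_proj_apply hS v, map_sum]
          exact Finset.sum_congr rfl fun p _ => (hdec.sum_proj_apply hS _).symm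
      _ = ∑ x ∈ S ×ˢ S, (∏ j, z j ^ (m x i j).toNat) • B x i v := by
          rw [Finset.sum_product]
          exact Finset.sum_congr rfl fun p _ => Finset.sum_congr rfl fun r _ =>
            proj_connection_proj_eq_monomial hdec hA hequiv hΩ.continuous p r i v z
      _ = _ := by simp only [sum_apply, smul_apply]
end

section
/- Let (C_•, d) be a cochain complex of k-vector spaces with a descending filtration F (each F^p C_• a subcomplex, separated and exhaustive in each degree, all spaces possibly infinite dimensional). Equip H^k(C_•) with the induced filtration F^p H^k = im(H^k(F^p C_•) → H^k(C_•)). Then the k-th cohomology of the Rees complex (Rees(C_•), Rees(d)) over k[z], taken modulo its z-torsion, is isomorphic as a graded k[z]-module to the Rees module Rees(H^k(C_•), F). -/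
set_option maxHeartbeats 1000000
set_option synthInstance.maxHeartbeats 400000

open ToricRees

namespace Stmt16

variable {k : Type*} [Field k] {C : ℤ → Type*} [∀ j, AddCommGroup (C j)] [∀ j, Module k (C j)]

/-- The cocycles of the Rees complex in degree `j + 1`: elements of the Rees module
`Rees(C_{j+1}, F)` killed by the Rees differential (the map induced by `d_{j+1}`). -/
noncomputable def reesCocycles (dC : ∀ j : ℤ, C j →ₗ[k] C (j + 1))
    (F : ∀ j : ℤ, ℤ → Submodule k (C j)) (hF : ∀ j, IsFilt (F j)) (j : ℤ) :
    Submodule (MvPolynomial (Fin 1) k) (MIdx 1 →₀ C (j + 1)) :=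
  ReesModule (fun _ : Fin 1 => F (j + 1)) (fun _ => hF (j + 1)) ⊓
    LinearMap.ker (reesMapA (dC (j + 1)))

/-- The coboundaries of the Rees complex in degree `j + 1`: the image of the Rees module
`Rees(C_j, F)` under the Rees differential induced by `d_j`. -/
noncomputable def reesCoboundaries (dC : ∀ j : ℤ, C j →ₗ[k] C (j + 1))
    (F : ∀ j : ℤ, ℤ → Submodule k (C j)) (hF : ∀ j, IsFilt (F j)) (j : ℤ) :
    Submodule (MvPolynomial (Fin 1) k) (MIdx 1 →₀ C (j + 1)) :=
  Submodule.map (reesMapA (dC j)) (ReesModule (fun _ : Fin 1 => F j) (fun _ => hF j))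

/-- The cohomology of the Rees complex over `k[z]` in degree `j + 1`. -/
noncomputable def reesCohomology (dC : ∀ j : ℤ, C j →ₗ[k] C (j + 1))
    (F : ∀ j : ℤ, ℤ → Submodule k (C j)) (hF : ∀ j, IsFilt (F j)) (j : ℤ) :=
  ↥(reesCocycles dC F hF j) ⧸
    Submodule.comap (reesCocycles dC F hF j).subtype (reesCoboundaries dC F hF j)

noncomputable instance (dC : ∀ j : ℤ, C j →ₗ[k] C (j + 1))
    (F : ∀ j : ℤ, ℤ → Submodule k (C j)) (hF : ∀ j, IsFilt (F j)) (j : ℤ) :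
    AddCommGroup (reesCohomology dC F hF j) := by
  unfold reesCohomology; infer_instance

noncomputable instance (dC : ∀ j : ℤ, C j →ₗ[k] C (j + 1))
    (F : ∀ j : ℤ, ℤ → Submodule k (C j)) (hF : ∀ j, IsFilt (F j)) (j : ℤ) :
    Module (MvPolynomial (Fin 1) k) (reesCohomology dC F hF j) := by
  unfold reesCohomology; infer_instance

/-- The cohomology of the original complex in degree `j + 1`: `ker d_{j+1} / im d_j`. -/
noncomputable def cohomology (dC : ∀ j : ℤ, C j →ₗ[k] C (j + 1)) (j : ℤ) :=
  ↥(LinearMap.ker (dC (j + 1))) ⧸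
    Submodule.comap (LinearMap.ker (dC (j + 1))).subtype (LinearMap.range (dC j))

noncomputable instance (dC : ∀ j : ℤ, C j →ₗ[k] C (j + 1)) (j : ℤ) :
    AddCommGroup (cohomology dC j) := by
  unfold cohomology; infer_instance

noncomputable instance (dC : ∀ j : ℤ, C j →ₗ[k] C (j + 1)) (j : ℤ) :
    Module k (cohomology dC j) := by
  unfold cohomology; infer_instance

/-- The projection from cocycles to cohomology classes. -/
noncomputable def toCohomology (dC : ∀ j : ℤ, C j →ₗ[k] C (j + 1)) (j : ℤ) :
    ↥(LinearMap.ker (dC (j + 1))) →ₗ[k] cohomology dC j :=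
  (Submodule.comap (LinearMap.ker (dC (j + 1))).subtype (LinearMap.range (dC j))).mkQ

/-- The induced filtration on cohomology:
`F̄^p H^{j+1} = im(H^{j+1}(F^p C_•) → H^{j+1}(C_•))`. -/
noncomputable def inducedFilt (dC : ∀ j : ℤ, C j →ₗ[k] C (j + 1))
    (F : ∀ j : ℤ, ℤ → Submodule k (C j)) (j : ℤ) (p : ℤ) :
    Submodule k (cohomology dC j) :=
  Submodule.map (toCohomology dC j)
    (Submodule.comap (LinearMap.ker (dC (j + 1))).subtype (F (j + 1) p))
end Stmt16

/-!
A Rees cocycle is a Laurent polynomial `Σ x_g z^g` whose coefficients are cocycles with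
`x_g ∈ F^{-g}`; sending it to `Σ [x_g] z^g` gives a map to the Laurent module of `H^{j+1}`
which vanishes on Rees coboundaries. Its image is exactly `Rees(H^{j+1}, F̄)`, because `F̄^p`
consists of the classes of the cocycles in `F^p`. Its kernel is the `z`-torsion: if every
`x_g = d v_g`, then `z^N Σ v_g z^g` lies in `Rees(C_j, F)` for `N` large since `F` is exhaustive,
so `z^N x` is a Rees coboundary; conversely the Laurent module is torsion-free, so torsion
classes map to zero.
-/

namespace ToricRees

variable {k : Type*} [Field k] {n : ℕ} {V W : Type*} [AddCommGroup V] [Module k V]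
  [AddCommGroup W] [Module k W]

lemma mem_ReesModule_fin_one_iff {G : ℤ → Submodule k V} {hG : ∀ _ : Fin 1, IsFilt G}
    {s : MIdx 1 →₀ V} :
    s ∈ ReesModule (fun _ : Fin 1 => G) hG ↔ ∀ d : MIdx 1, s d ∈ G (-d 0) := by
  simp only [mem_ReesModule_iff, fcap, Submodule.mem_iInf, Fin.forall_fin_one, Pi.neg_apply]

lemma monomial_one_smul (a : Fin n →₀ ℕ) (s : MIdx n →₀ V) :
    (MvPolynomial.monomial a 1 : MvPolynomial (Fin n) k) • s
      = shiftL (k := k) (fun i => (a i : ℤ)) s := by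
  rw [poly_smul_def, polyActionHom, MvPolynomial.monomial]
  erw [AddMonoidAlgebra.lift_single]
  rw [one_smul]
  rfl

lemma poly_smul_apply (p : MvPolynomial (Fin n) k) (s : MIdx n →₀ V) (d : MIdx n) :
    (p • s) d = ∑ a ∈ p.support, p.coeff a • s (d - fun i => (a i : ℤ)) := by
  conv_lhs => rw [p.as_sum]
  rw [Finset.sum_smul, Finsupp.finsetSum_apply]
  refine Finset.sum_congr rfl fun a _ => ?_
  rw [← mul_one (p.coeff a), ← MvPolynomial.C_mul_monomial, mul_smul, C_smul,
    monomial_one_smul, Finsupp.smul_apply, shiftL_apply, mul_one]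

lemma X_pow_smul_apply (N : ℕ) (s : MIdx 1 →₀ V) (d : MIdx 1) :
    ((MvPolynomial.X 0 : MvPolynomial (Fin 1) k) ^ N • s) d = s (d - fun _ => (N : ℤ)) := by
  rw [MvPolynomial.X_pow_eq_monomial, monomial_one_smul, shiftL_apply]
  congr 2
  funext i
  rw [Fin.fin_one_eq_zero i, Finsupp.single_eq_same]

/-- Comparing leading exponents: if `d₀` is the top index of `s` and `a₁` the top exponent
of `p`, the coefficient of `p • s` at `d₀ + a₁` is `p.coeff a₁ • s d₀ ≠ 0`. -/
instance : Module.IsTorsionFree (MvPolynomial (Fin 1) k) (MIdx 1 →₀ V) := by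
  refine Module.isTorsionFree_iff_smul_eq_zero.2 fun p s hps => ?_
  classical
  by_contra! hne
  obtain ⟨hp, hs⟩ := hne
  obtain ⟨d₀, hd₀, hd₀_max⟩ := s.support.exists_max_image (fun e => e 0)
    (Finsupp.support_nonempty_iff.2 hs)
  obtain ⟨a₁, ha₁, ha₁_max⟩ := p.support.exists_max_image (fun a => a 0)
    (Finset.nonempty_iff_ne_empty.2 (MvPolynomial.support_eq_empty.not.2 hp))
  have hlower : ∀ a ∈ p.support, a ≠ a₁ →
      p.coeff a • s ((d₀ + fun _ => (a₁ 0 : ℤ)) - fun i => (a i : ℤ)) = 0 := by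
    intro a ha hne
    have hlt : a 0 < a₁ 0 := (ha₁_max a ha).lt_of_ne fun h =>
      hne (Finsupp.ext fun i => by rw [Fin.fin_one_eq_zero i, h])
    rw [Finsupp.notMem_support_iff.1 fun hmem => by
      have := hd₀_max _ hmem
      simp only [Pi.sub_apply, Pi.add_apply] at this
      omega, smul_zero]
  have htop : ((d₀ + fun _ => (a₁ 0 : ℤ)) - fun i => (a₁ i : ℤ)) = d₀ := by
    funext i
    rw [Fin.fin_one_eq_zero i]
    simp
  have hcoeff := congrArg (· (d₀ + fun _ => (a₁ 0 : ℤ))) hps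
  simp only [poly_smul_apply, Finsupp.coe_zero, Pi.zero_apply] at hcoeff
  rw [Finset.sum_eq_single_of_mem a₁ ha₁ hlower, htop] at hcoeff
  exact smul_ne_zero (MvPolynomial.mem_support_iff.1 ha₁) (Finsupp.mem_support_iff.1 hd₀) hcoeff

lemma exists_X_pow_smul_mem_ReesModule {G : ℤ → Submodule k V} (hG : IsFilt G)
    (s : MIdx 1 →₀ V) :
    ∃ N : ℕ, (MvPolynomial.X 0 : MvPolynomial (Fin 1) k) ^ N • s
      ∈ ReesModule (fun _ : Fin 1 => G) (fun _ => hG) := by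
  obtain ⟨P, hP⟩ := hG.exh
  obtain ⟨M, hM⟩ := (s.support.image fun e => -e 0 - P).bddAbove
  refine ⟨M.toNat, mem_ReesModule_fin_one_iff.2 fun d => ?_⟩
  rw [X_pow_smul_apply]
  by_cases hd : d - (fun _ => (M.toNat : ℤ)) ∈ s.support
  · have hle := hM (Finset.mem_coe.2 (Finset.mem_image_of_mem _ hd))
    simp only [Pi.sub_apply] at hle
    rw [hP _ (by omega)]
    exact Submodule.mem_top
  · rw [Finsupp.notMem_support_iff.1 hd]
    exact Submodule.zero_mem _

lemma exists_reesMapA_eq (f : V →ₗ[k] W) (P : MIdx n → Submodule k V) (s : MIdx n →₀ W)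
    (hs : ∀ d, s d ∈ (P d).map f) :
    ∃ t : MIdx n →₀ V, (∀ d, t d ∈ P d) ∧ reesMapA f t = s := by
  classical
  choose w hwP hw using fun d => Submodule.mem_map.1 (hs d)
  refine ⟨Finsupp.onFinset s.support (fun d => if s d = 0 then 0 else w d)
    (fun d hd => Finsupp.mem_support_iff.2 fun h => hd (if_pos h)), fun d => ?_,
    Finsupp.ext fun d => ?_⟩
  · rw [Finsupp.onFinset_apply]
    split_ifs
    exacts [Submodule.zero_mem _, hwP d]
  · rw [reesMapA_apply, Finsupp.onFinset_apply]
    split_ifs with h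
    exacts [by rw [map_zero, h], hw d]

lemma ker_reesMapA (f : V →ₗ[k] W) :
    LinearMap.ker (reesMapA (n := n) f)
      = LinearMap.range (reesMapA (LinearMap.ker f).subtype) := by
  ext s
  constructor
  · intro hs
    obtain ⟨t, -, ht⟩ := exists_reesMapA_eq (LinearMap.ker f).subtype (fun _ => ⊤) s
      fun d => by
        rw [Submodule.map_top, Submodule.range_subtype]
        exact congrArg (· d) hs
    exact ⟨t, ht⟩
  · rintro ⟨t, rfl⟩
    exact Finsupp.ext fun d => (t d).2

lemma reesMapA_injective {f : V →ₗ[k] W} (hf : Function.Injective f) :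
    Function.Injective (reesMapA (n := n) f) :=
  Finsupp.mapRange_injective f f.map_zero hf

noncomputable def kerReesMapAEquiv (f : V →ₗ[k] W) :
    LinearMap.ker (reesMapA (n := n) f)
      ≃ₗ[MvPolynomial (Fin n) k] (MIdx n →₀ LinearMap.ker f) :=
  ((LinearEquiv.ofInjective _ (reesMapA_injective (LinearMap.ker f).injective_subtype)).trans
    (LinearEquiv.ofEq _ _ (ker_reesMapA f).symm)).symm

end ToricRees

namespace Stmt16

variable {k : Type*} [Field k] {C : ℤ → Type*} [∀ j, AddCommGroup (C j)] [∀ j, Module k (C j)]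

section ClassMap

variable (dC : ∀ j : ℤ, C j →ₗ[k] C (j + 1)) (F : ∀ j : ℤ, ℤ → Submodule k (C j))
  (hF : ∀ j, IsFilt (F j)) (j : ℤ)

lemma reesCocycles_le_ker : reesCocycles dC F hF j ≤ LinearMap.ker (reesMapA (dC (j + 1))) :=
  inf_le_right

noncomputable def reesClassMap :
    reesCocycles dC F hF j →ₗ[MvPolynomial (Fin 1) k] (MIdx 1 →₀ cohomology dC j) :=
  reesMapA (toCohomology dC j) ∘ₗ (kerReesMapAEquiv (dC (j + 1))).toLinearMap ∘ₗ
    Submodule.inclusion (reesCocycles_le_ker dC F hF j)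

variable {dC F hF j}

lemma exists_reesMapA_subtype_eq (x : reesCocycles dC F hF j) :
    ∃ c : MIdx 1 →₀ LinearMap.ker (dC (j + 1)),
      reesMapA (LinearMap.ker (dC (j + 1))).subtype c = x := by
  rw [← LinearMap.mem_range, ← ker_reesMapA]
  exact reesCocycles_le_ker dC F hF j x.2

lemma reesClassMap_apply_of_eq {x : reesCocycles dC F hF j}
    {c : MIdx 1 →₀ LinearMap.ker (dC (j + 1))}
    (hc : reesMapA (LinearMap.ker (dC (j + 1))).subtype c = x) :
    reesClassMap dC F hF j x = reesMapA (toCohomology dC j) c := by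
  have hcx :
      kerReesMapAEquiv (dC (j + 1)) (Submodule.inclusion (reesCocycles_le_ker dC F hF j) x) = c :=
    (LinearEquiv.eq_symm_apply _).1 (Subtype.ext hc.symm)
  rw [reesClassMap, LinearMap.comp_apply, LinearMap.comp_apply, LinearEquiv.coe_coe, hcx]

lemma reesClassMap_eq_zero_iff (x : reesCocycles dC F hF j) :
    reesClassMap dC F hF j x = 0 ↔
      ∀ d, (x : MIdx 1 →₀ C (j + 1)) d ∈ LinearMap.range (dC j) := by
  obtain ⟨c, hc⟩ := exists_reesMapA_subtype_eq x
  rw [reesClassMap_apply_of_eq hc, ← hc, Finsupp.ext_iff]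
  refine forall_congr' fun d => ?_
  rw [reesMapA_apply, reesMapA_apply, Finsupp.coe_zero, Pi.zero_apply]
  exact Submodule.Quotient.mk_eq_zero _

lemma reesCoboundaries_le_ker_reesClassMap :
    (reesCoboundaries dC F hF j).comap (reesCocycles dC F hF j).subtype
      ≤ LinearMap.ker (reesClassMap dC F hF j) := by
  rintro x ⟨y, -, hy⟩
  exact (reesClassMap_eq_zero_iff x).2 fun d => ⟨y d, congrArg (· d) hy⟩

lemma exists_X_pow_smul_mem_reesCoboundaries {x : reesCocycles dC F hF j}
    (hx : reesClassMap dC F hF j x = 0) :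
    ∃ N : ℕ, (MvPolynomial.X 0 : MvPolynomial (Fin 1) k) ^ N • (x : MIdx 1 →₀ C (j + 1))
      ∈ reesCoboundaries dC F hF j := by
  obtain ⟨v, -, hv⟩ := exists_reesMapA_eq (dC j) (fun _ => ⊤) x fun d => by
    rw [Submodule.map_top]
    exact (reesClassMap_eq_zero_iff x).1 hx d
  obtain ⟨N, hN⟩ := exists_X_pow_smul_mem_ReesModule (k := k) (hF j) v
  exact ⟨N, _, hN, by rw [map_smul, hv]⟩

lemma range_reesClassMap (hFbar : IsFilt (inducedFilt dC F j)) :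
    LinearMap.range (reesClassMap dC F hF j)
      = ReesModule (fun _ : Fin 1 => inducedFilt dC F j) (fun _ => hFbar) := by
  apply le_antisymm
  · rintro _ ⟨x, rfl⟩
    obtain ⟨c, hc⟩ := exists_reesMapA_subtype_eq x
    have hxF := mem_ReesModule_fin_one_iff.1 (Submodule.mem_inf.1 x.2).1
    rw [reesClassMap_apply_of_eq hc]
    refine mem_ReesModule_fin_one_iff.2 fun d => ⟨c d, ?_, rfl⟩
    have hcd := hxF d
    rwa [← hc, reesMapA_apply] at hcd
  · intro s hs
    obtain ⟨c, hcF, rfl⟩ := exists_reesMapA_eq (toCohomology dC j) _ s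
      (mem_ReesModule_fin_one_iff.1 hs)
    have hx : reesMapA (LinearMap.ker (dC (j + 1))).subtype c ∈ reesCocycles dC F hF j :=
      ⟨mem_ReesModule_fin_one_iff.2 hcF, Finsupp.ext fun d => (c d).2⟩
    exact ⟨⟨_, hx⟩, reesClassMap_apply_of_eq rfl⟩

variable (dC F hF j) in
noncomputable def reesCohomologyClassMap :
    reesCohomology dC F hF j →ₗ[MvPolynomial (Fin 1) k] (MIdx 1 →₀ cohomology dC j) :=
  Submodule.liftQ _ _ reesCoboundaries_le_ker_reesClassMap

lemma reesCohomologyClassMap_mk (x : reesCocycles dC F hF j) :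
    reesCohomologyClassMap dC F hF j (Submodule.Quotient.mk x) = reesClassMap dC F hF j x :=
  rfl

noncomputable def reesCohomologyToRees (hFbar : IsFilt (inducedFilt dC F j)) :
    reesCohomology dC F hF j →ₗ[MvPolynomial (Fin 1) k]
      ReesModule (fun _ : Fin 1 => inducedFilt dC F j) (fun _ => hFbar) :=
  LinearMap.codRestrict _ (reesCohomologyClassMap dC F hF j) fun t => by
    obtain ⟨x, rfl⟩ := Submodule.Quotient.mk_surjective _ t
    rw [← range_reesClassMap (hF := hF)]
    exact LinearMap.mem_range_self _ x

lemma reesCohomologyToRees_surjective (hFbar : IsFilt (inducedFilt dC F j)) :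
    Function.Surjective (reesCohomologyToRees (hF := hF) hFbar) := by
  rintro ⟨s, hs⟩
  rw [← range_reesClassMap (hF := hF)] at hs
  obtain ⟨x, rfl⟩ := hs
  exact ⟨Submodule.Quotient.mk x, rfl⟩

lemma ker_reesCohomologyToRees (hFbar : IsFilt (inducedFilt dC F j)) :
    LinearMap.ker (reesCohomologyToRees (hF := hF) hFbar)
      = Submodule.torsion (MvPolynomial (Fin 1) k) (reesCohomology dC F hF j) := by
  rw [reesCohomologyToRees, LinearMap.ker_codRestrict]
  apply le_antisymm
  · intro t ht
    obtain ⟨x, rfl⟩ := Submodule.Quotient.mk_surjective _ t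
    obtain ⟨N, hN⟩ :=
      exists_X_pow_smul_mem_reesCoboundaries ((reesCohomologyClassMap_mk x).symm.trans ht)
    refine (Submodule.mem_torsion_iff _).2 ⟨⟨_, mem_nonZeroDivisors_of_ne_zero
      (pow_ne_zero N (MvPolynomial.X_ne_zero 0))⟩, ?_⟩
    exact (Submodule.Quotient.mk_smul _ _ _).symm.trans
      ((Submodule.Quotient.mk_eq_zero _).2 hN)
  · intro t ht
    obtain ⟨⟨p, hp⟩, hpt⟩ := (Submodule.mem_torsion_iff _).1 ht
    have hmap : p • reesCohomologyClassMap dC F hF j t = 0 := by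
      rw [← map_smul, show p • t = 0 from hpt, map_zero]
    exact (smul_eq_zero.1 hmap).resolve_left (nonZeroDivisors.ne_zero hp)

end ClassMap

theorem rees_cohomology_mod_torsion_general (dC : ∀ j : ℤ, C j →ₗ[k] C (j + 1))
    (F : ∀ j : ℤ, ℤ → Submodule k (C j)) (hF : ∀ j, IsFilt (F j)) (j : ℤ)
    (hFbar : IsFilt (inducedFilt dC F j)) :
    ∃ e : (reesCohomology dC F hF j ⧸
            Submodule.torsion (MvPolynomial (Fin 1) k) (reesCohomology dC F hF j))
          ≃ₗ[MvPolynomial (Fin 1) k]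
          ↥(ReesModule (fun _ : Fin 1 => inducedFilt dC F j) (fun _ => hFbar)),
      ∀ (x : ↥(reesCocycles dC F hF j)) (c : MIdx 1 →₀ ↥(LinearMap.ker (dC (j + 1)))),
        (∀ g : MIdx 1, (c g : C (j + 1)) = (x : MIdx 1 →₀ C (j + 1)) g) →
        ∀ g : MIdx 1,
          ((e (Submodule.Quotient.mk (Submodule.Quotient.mk x)) : _)
              : MIdx 1 →₀ cohomology dC j) g
            = toCohomology dC j (c g) := by
  refine ⟨(Submodule.quotEquivOfEq _ _ (ker_reesCohomologyToRees hFbar).symm).trans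
    ((reesCohomologyToRees hFbar).quotKerEquivOfSurjective
      (reesCohomologyToRees_surjective hFbar)), fun x c hc g => ?_⟩
  have hcx : reesMapA (LinearMap.ker (dC (j + 1))).subtype c = x := Finsupp.ext hc
  exact congrArg (· g) (reesClassMap_apply_of_eq hcx)

/-- For a filtered cochain complex `(C_•, d)` of `k`-vector spaces, with
filtration `F` by subcomplexes, descending, separated and exhaustive in each degree, the
degree-`j+1` cohomology of the Rees complex `(Rees(C_•,F), Rees(d))` over `k[z]`, taken
modulo its torsion submodule, is isomorphic as a (graded) `k[z]`-module to the Rees module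
of `H^{j+1}(C_•)` with its induced filtration.  The isomorphism sends the class of a Rees
cocycle `x` to the degreewise family of the cohomology classes of its components. -/
theorem rees_cohomology_mod_torsion (dC : ∀ j : ℤ, C j →ₗ[k] C (j + 1))
    (F : ∀ j : ℤ, ℤ → Submodule k (C j)) (hF : ∀ j, IsFilt (F j))
    (hdF : ∀ j p, (F j p).map (dC j) ≤ F (j + 1) p)
    (hdd : ∀ (j : ℤ) (x : C j), dC (j + 1) (dC j x) = 0) (j : ℤ)
    (hFbar : IsFilt (inducedFilt dC F j)) :
    ∃ e : (reesCohomology dC F hF j ⧸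
            Submodule.torsion (MvPolynomial (Fin 1) k) (reesCohomology dC F hF j))
          ≃ₗ[MvPolynomial (Fin 1) k]
          ↥(ReesModule (fun _ : Fin 1 => inducedFilt dC F j) (fun _ => hFbar)),
      ∀ (x : ↥(reesCocycles dC F hF j)) (c : MIdx 1 →₀ ↥(LinearMap.ker (dC (j + 1)))),
        (∀ g : MIdx 1, (c g : C (j + 1)) = (x : MIdx 1 →₀ C (j + 1)) g) →
        ∀ g : MIdx 1,
          ((e (Submodule.Quotient.mk (Submodule.Quotient.mk x)) : _)
              : MIdx 1 →₀ cohomology dC j) g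
            = toCohomology dC j (c g) :=
  rees_cohomology_mod_torsion_general dC F hF j hFbar

end Stmt16
end
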